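/- arXiv:2509.18296 — 10 statements merged into one kernel-verified Lean document; each statement's English description precedes it below -/
import Mathlib

section
/- Let n ≥ 1 and for each j = 1,…,n let G_j ⊆ ℂ be a nonempty, bounded, open set such that there exist an open set Ω_j ⊇ closure(G_j) and an injective holomorphic map φ_j : Ω_j → ℂ with φ_j(G_j) = 𝔻(0,1) (the open unit disc). Set G := G_1 × ⋯ × G_n ⊆ ℂⁿ. Then for every f : ℂⁿ → ℂ that is continuous on closure(G) and holomorphic on G, and every ε > 0, there exist an open set U ⊇ closure(G) and a function F : ℂⁿ → ℂ holomorphic on U such that sup_{z ∈ closure(G)} |f(z) − F(z)| ≤ ε. -/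
/-!
For `r < 1` close to `1`, the map `ψⱼ z = φⱼ⁻¹ (r φⱼ z)` is holomorphic on a neighbourhood of
`closure Gⱼ`, maps it into `Gⱼ`, and is uniformly close to the identity on `closure Gⱼ`, because
`φⱼ⁻¹` is uniformly continuous on the compact set `φⱼ (closure Gⱼ)`. The product map
`Ψ = (ψ₁, …, ψₙ)` then sends a neighbourhood of `closure G` into `G`, so `f ∘ Ψ` is holomorphic
there, and it is uniformly close to `f` on `closure G` by uniform continuity of `f`.
-/

open Metric Set Function Filter Topology

theorem IsCompact.continuousOn_invFunOn_image {X Y : Type*} [TopologicalSpace X] [Nonempty X]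
    [TopologicalSpace Y] [T2Space Y] {K s : Set X} {φ : X → Y} (hK : IsCompact K)
    (hKs : K ⊆ s) (hφ : ContinuousOn φ K) (hinj : InjOn φ s) :
    ContinuousOn (invFunOn φ s) (φ '' K) := by
  refine continuousOn_iff_isClosed.2 fun t ht => ⟨φ '' (K ∩ t), ?_, ?_⟩
  · exact ((hK.inter_right ht).image_of_continuousOn (hφ.mono inter_subset_left)).isClosed
  · ext w
    constructor
    · rintro ⟨hwt, x, hxK, rfl⟩
      rw [mem_preimage, hinj.leftInvOn_invFunOn (hKs hxK)] at hwt
      exact ⟨mem_image_of_mem φ ⟨hxK, hwt⟩, mem_image_of_mem φ hxK⟩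
    · rintro ⟨⟨x, ⟨hxK, hxt⟩, rfl⟩, hw⟩
      refine ⟨?_, hw⟩
      rwa [mem_preimage, hinj.leftInvOn_invFunOn (hKs hxK)]

theorem Set.InjOn.eventually_deriv_ne_zero {Ω : Set ℂ} {φ : ℂ → ℂ} (hΩ : IsOpen Ω)
    (hφ : DifferentiableOn ℂ φ Ω) (hinj : InjOn φ Ω) {z : ℂ} (hz : z ∈ Ω) :
    ∀ᶠ w in 𝓝[≠] z, deriv φ w ≠ 0 := by
  refine ((hφ.analyticOnNhd hΩ).deriv z hz).eventually_eq_zero_or_eventually_ne_zero.resolve_left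
    fun hzero => ?_
  obtain ⟨ρ, hρ, hball⟩ := Metric.eventually_nhds_iff_ball.mp (hzero.and (hΩ.eventually_mem hz))
  have hconst : ∀ w ∈ ball z ρ, φ w = φ z := fun w hw =>
    isOpen_ball.is_const_of_deriv_eq_zero (convex_ball z ρ).isPreconnected
      (hφ.mono fun y hy => (hball y hy).2) (fun y hy => (hball y hy).1) hw (mem_ball_self hρ)
  have hw : z + (ρ / 2 : ℝ) ∈ ball z ρ := by
    rw [mem_ball, dist_self_add_left, Complex.norm_real, Real.norm_of_nonneg (by positivity)]
    linarith
  have := hinj (hball _ hw).2 hz (hconst _ hw)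
  rw [add_eq_left, Complex.ofReal_eq_zero] at this
  linarith

theorem Set.InjOn.differentiableOn_invFunOn {Ω V : Set ℂ} {φ : ℂ → ℂ} (hΩ : IsOpen Ω)
    (hφ : DifferentiableOn ℂ φ Ω) (hinj : InjOn φ Ω) (hV : IsOpen V) (hVΩ : V ⊆ φ '' Ω)
    (hcont : ContinuousOn (invFunOn φ Ω) V) : DifferentiableOn ℂ (invFunOn φ Ω) V := by
  -- Off the isolated zeros of `deriv φ` the inverse function theorem applies; at those zeros the
  -- singularity of the continuous inverse is removable.
  set g := invFunOn φ Ω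
  have hgΩ : MapsTo g V Ω := fun w hw => (invFunOn_pos (hVΩ hw)).1
  have hφg : ∀ w ∈ V, φ (g w) = w := fun w hw => (invFunOn_pos (hVΩ hw)).2
  have hdiff : ∀ w ∈ V, deriv φ (g w) ≠ 0 → DifferentiableAt ℂ g w := by
    intro w hw hd
    have hA := (hφ.analyticOnNhd hΩ) (g w) (hgΩ hw)
    have hleft : ∀ᶠ x in 𝓝 (g w), g (φ x) = x :=
      (hΩ.eventually_mem (hgΩ hw)).mono fun x hx => hinj.leftInvOn_invFunOn hx
    simpa only [hφg w hw] using
      (hA.hasStrictDerivAt.to_local_left_inverse hd hleft).hasDerivAt.differentiableAt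
  intro w₀ hw₀
  have hg_cont : ContinuousAt g w₀ := hcont.continuousAt (hV.mem_nhds hw₀)
  have hg_punct : Tendsto g (𝓝[≠] w₀) (𝓝[≠] (g w₀)) := by
    refine tendsto_nhdsWithin_of_tendsto_nhds_of_eventually_within _
      (hg_cont.mono_left nhdsWithin_le_nhds) ?_
    filter_upwards [self_mem_nhdsWithin, nhdsWithin_le_nhds (hV.mem_nhds hw₀)] with w hne hw
    exact fun h => hne (by rw [← hφg w hw, ← hφg w₀ hw₀, mem_singleton_iff.1 h]; rfl)
  refine (Complex.analyticAt_of_differentiable_on_punctured_nhds_of_continuousAt ?_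
    hg_cont).differentiableAt.differentiableWithinAt
  filter_upwards [hg_punct.eventually (hinj.eventually_deriv_ne_zero hΩ hφ (hgΩ hw₀)),
    nhdsWithin_le_nhds (hV.mem_nhds hw₀)] with w hd hw
  exact hdiff w hw hd

def HasInwardHolomorphicApprox {E : Type*} [NormedAddCommGroup E] [NormedSpace ℂ E]
    (s : Set E) : Prop :=
  ∀ δ > 0, ∃ (U : Set E) (ψ : E → E), IsOpen U ∧ closure s ⊆ U ∧ DifferentiableOn ℂ ψ U ∧
    MapsTo ψ U s ∧ ∀ z ∈ closure s, dist (ψ z) z < δ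

theorem hasInwardHolomorphicApprox_of_injOn_image_eq_ball {G Ω : Set ℂ} {φ : ℂ → ℂ}
    (hbd : Bornology.IsBounded G) (hΩ : IsOpen Ω) (hGΩ : closure G ⊆ Ω)
    (hinj : InjOn φ Ω) (hφ : DifferentiableOn ℂ φ Ω) (himg : φ '' G = ball 0 1) :
    HasInwardHolomorphicApprox G := by
  intro δ hδ
  set K := closure G
  set g := invFunOn φ Ω
  have hφK : ContinuousOn φ K := hφ.continuousOn.mono hGΩ
  have hK_ball : MapsTo φ K (closedBall 0 1) := by
    rw [← closure_ball (0 : ℂ) one_ne_zero, ← himg]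
    exact fun z hz => hφK.image_closure (mem_image_of_mem φ hz)
  have hball_K : ball 0 1 ⊆ φ '' K := himg ▸ image_mono subset_closure
  have hgφ : ∀ z ∈ K, g (φ z) = z := fun z hz => hinj.leftInvOn_invFunOn (hGΩ hz)
  have hg_ball : ∀ w ∈ ball (0 : ℂ) 1, g w ∈ G := by
    rw [← himg]
    rintro _ ⟨z, hz, rfl⟩
    rwa [hgφ z (subset_closure hz)]
  have hg_cont : ContinuousOn g (φ '' K) :=
    hbd.isCompact_closure.continuousOn_invFunOn_image hGΩ hφK hinj
  have hg_diff : DifferentiableOn ℂ g (ball 0 1) :=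
    hinj.differentiableOn_invFunOn hΩ hφ isOpen_ball
      (hball_K.trans (image_mono hGΩ)) (hg_cont.mono hball_K)
  obtain ⟨η, hη, hg_unif⟩ := Metric.uniformContinuousOn_iff.1
    ((hbd.isCompact_closure.image_of_continuousOn hφK).uniformContinuousOn_of_continuous
      hg_cont) δ hδ
  obtain ⟨r, hr_gt, hr_lt⟩ := exists_between (max_lt (sub_lt_self 1 hη) zero_lt_one)
  have hr₀ : 0 < r := (le_max_right _ _).trans_lt hr_gt
  have hφz : ∀ z ∈ K, ‖φ z‖ ≤ 1 := fun z hz => mem_closedBall_zero_iff.1 (hK_ball hz)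
  have hK_shrunk : ∀ z ∈ K, r • φ z ∈ ball (0 : ℂ) 1 := fun z hz => by
    rw [mem_ball_zero_iff, norm_smul, Real.norm_of_nonneg hr₀.le]
    nlinarith [hφz z hz, norm_nonneg (φ z)]
  have hK_close : ∀ z ∈ K, dist (r • φ z) (φ z) < η := fun z hz => by
    rw [dist_eq_norm, show r • φ z - φ z = (r - 1) • φ z by rw [sub_smul, one_smul], norm_smul,
      Real.norm_of_nonpos (by linarith)]
    nlinarith [hφz z hz, norm_nonneg (φ z), le_max_left (1 - η) 0]
  refine ⟨Ω ∩ (fun z => r • φ z) ⁻¹' ball 0 1, fun z => g (r • φ z),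
    (hφ.continuousOn.const_smul r).isOpen_inter_preimage hΩ isOpen_ball,
    fun z hz => ⟨hGΩ hz, hK_shrunk z hz⟩,
    hg_diff.comp ((hφ.const_smul r).mono inter_subset_left) fun z hz => hz.2,
    fun z hz => hg_ball _ hz.2, fun z hz => ?_⟩
  simpa only [hgφ z hz] using
    hg_unif _ (hball_K (hK_shrunk z hz)) _ (mem_image_of_mem φ hz) (hK_close z hz)

theorem HasInwardHolomorphicApprox.pi {ι : Type*} [Fintype ι] {E : ι → Type*}
    [∀ i, NormedAddCommGroup (E i)] [∀ i, NormedSpace ℂ (E i)] {s : ∀ i, Set (E i)}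
    (hs : ∀ i, HasInwardHolomorphicApprox (s i)) : HasInwardHolomorphicApprox (univ.pi s) := by
  intro δ hδ
  choose U ψ hU hsU hψ hψs hψδ using fun i => hs i δ hδ
  refine ⟨univ.pi U, fun z i => ψ i (z i), isOpen_set_pi finite_univ fun i _ => hU i, ?_,
    differentiableOn_pi.2 fun i =>
      (hψ i).comp (differentiableOn_apply i _) fun z hz => hz i trivial,
    fun z hz i _ => hψs i (hz i trivial), fun z hz => ?_⟩
  · rw [closure_pi_set]
    exact pi_mono fun i _ => hsU i
  · rw [closure_pi_set] at hz
    exact (dist_pi_lt_iff hδ).2 fun i => hψδ i (z i) (hz i trivial)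

theorem HasInwardHolomorphicApprox.exists_differentiableOn_approx {E F : Type*}
    [NormedAddCommGroup E] [NormedSpace ℂ E] [NormedAddCommGroup F] [NormedSpace ℂ F]
    {s : Set E} (hs : HasInwardHolomorphicApprox s) (hK : IsCompact (closure s)) {f : E → F}
    (hfc : ContinuousOn f (closure s)) (hfd : DifferentiableOn ℂ f s) {ε : ℝ} (hε : 0 < ε) :
    ∃ (U : Set E) (F' : E → F), IsOpen U ∧ closure s ⊆ U ∧ DifferentiableOn ℂ F' U ∧
      ∀ z ∈ closure s, ‖f z - F' z‖ < ε := by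
  obtain ⟨δ, hδ, hf_unif⟩ :=
    Metric.uniformContinuousOn_iff.1 (hK.uniformContinuousOn_of_continuous hfc) ε hε
  obtain ⟨U, ψ, hU, hsU, hψ, hψs, hψδ⟩ := hs δ hδ
  refine ⟨U, f ∘ ψ, hU, hsU, hfd.comp hψ hψs, fun z hz => ?_⟩
  rw [← dist_eq_norm]
  exact hf_unif z hz (ψ z) (subset_closure (hψs (hsU hz))) (dist_comm z (ψ z) ▸ hψδ z hz)

theorem stmt_0_general (n : ℕ) (G : Fin n → Set ℂ)
    (hbd : ∀ j, Bornology.IsBounded (G j))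
    (hriem : ∀ j, ∃ (Ω : Set ℂ) (φ : ℂ → ℂ), IsOpen Ω ∧ closure (G j) ⊆ Ω ∧
      Set.InjOn φ Ω ∧ DifferentiableOn ℂ φ Ω ∧ φ '' G j = Metric.ball (0 : ℂ) 1)
    (f : (Fin n → ℂ) → ℂ)
    (hfc : ContinuousOn f (closure (Set.univ.pi G)))
    (hfd : DifferentiableOn ℂ f (Set.univ.pi G))
    (ε : ℝ) (hε : 0 < ε) :
    ∃ (U : Set (Fin n → ℂ)) (F : (Fin n → ℂ) → ℂ),
      IsOpen U ∧ closure (Set.univ.pi G) ⊆ U ∧ DifferentiableOn ℂ F U ∧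
      ∀ z ∈ closure (Set.univ.pi G), ‖f z - F z‖ ≤ ε := by
  have happrox : HasInwardHolomorphicApprox (univ.pi G) := .pi fun j => by
    obtain ⟨Ω, φ, hΩ, hGΩ, hinj, hφ, himg⟩ := hriem j
    exact hasInwardHolomorphicApprox_of_injOn_image_eq_ball (hbd j) hΩ hGΩ hinj hφ himg
  obtain ⟨U, F, hU, hGU, hF, hfF⟩ := happrox.exists_differentiableOn_approx
    (Bornology.IsBounded.pi hbd).isCompact_closure hfc hfd hε
  exact ⟨U, F, hU, hGU, hF, fun z hz => (hfF z hz).le⟩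

/-- Approximation of functions continuous on the closure and holomorphic
on a product `G = G₁ × ⋯ × Gₙ` of bounded simply connected planar domains with
"analytic-type" boundary (each `Gⱼ` is a Riemann-map image of the unit disc via a map
injective and holomorphic on a neighborhood of the closure) by functions holomorphic
on a neighborhood of the closure. -/
theorem stmt_0 (n : ℕ) (hn : 1 ≤ n) (G : Fin n → Set ℂ)
    (hne : ∀ j, (G j).Nonempty)
    (hbd : ∀ j, Bornology.IsBounded (G j))
    (hop : ∀ j, IsOpen (G j))
    (hriem : ∀ j, ∃ (Ω : Set ℂ) (φ : ℂ → ℂ), IsOpen Ω ∧ closure (G j) ⊆ Ω ∧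
      Set.InjOn φ Ω ∧ DifferentiableOn ℂ φ Ω ∧ φ '' G j = Metric.ball (0 : ℂ) 1)
    (f : (Fin n → ℂ) → ℂ)
    (hfc : ContinuousOn f (closure (Set.univ.pi G)))
    (hfd : DifferentiableOn ℂ f (Set.univ.pi G))
    (ε : ℝ) (hε : 0 < ε) :
    ∃ (U : Set (Fin n → ℂ)) (F : (Fin n → ℂ) → ℂ),
      IsOpen U ∧ closure (Set.univ.pi G) ⊆ U ∧ DifferentiableOn ℂ F U ∧
      ∀ z ∈ closure (Set.univ.pi G), ‖f z - F z‖ ≤ ε :=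
  stmt_0_general n G hbd hriem f hfc hfd ε hε
end

section
/- Let K_1,…,K_n ⊆ ℂ be nonempty compact sets, K := K_1 × ⋯ × K_n ⊆ ℂⁿ, and let u : C(K, ℂ) →L[ℂ] ℂ be a continuous linear functional on the Banach space of continuous complex-valued functions on K with the supremum norm. Define ũ : ℂⁿ → ℂ by ũ(λ) := u(z ↦ ∏_{j=1}^n (z_j − λ_j)⁻¹). Then ũ is holomorphic on the open set Ω := {λ ∈ ℂⁿ : λ_j ∉ K_j for every j}. -/
/-!
In the Banach algebra `C(K, ℂ)` the function `z ↦ ∏ⱼ (zⱼ - λⱼ)⁻¹` is the product of the inverses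
of the units `zⱼ - λⱼ • 1` (the coordinate functions shifted off their ranges). Inversion is
holomorphic on the group of units of a Banach algebra, so `λ ↦ ∏ⱼ (zⱼ - λⱼ)⁻¹` is a holomorphic
`C(K, ℂ)`-valued map on `Ω`, and so is its image under the continuous linear map `u`.
-/

theorem ContinuousMap.ringInverse_apply {X 𝕜 : Type*} [TopologicalSpace X] [DivisionRing 𝕜]
    [TopologicalSpace 𝕜] [IsTopologicalRing 𝕜] {f : C(X, 𝕜)} (hf : IsUnit f) (x : X) :
    Ring.inverse f x = (f x)⁻¹ :=
  eq_inv_of_mul_eq_one_right <| by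
    rw [← ContinuousMap.mul_apply, Ring.mul_inverse_cancel f hf, ContinuousMap.one_apply]

theorem differentiableAt_prod_ringInverse_sub_smul_one {𝕜 A ι : Type*}
    [NontriviallyNormedField 𝕜] [NormedCommRing A] [NormedAlgebra 𝕜 A] [CompleteSpace A]
    [Fintype ι] (a : ι → A) {ζ : ι → 𝕜} (hζ : ∀ j, IsUnit (a j - ζ j • 1)) :
    DifferentiableAt 𝕜 (fun ζ : ι → 𝕜 => ∏ j, Ring.inverse (a j - ζ j • 1)) ζ := by
  classical
  refine (HasFDerivAt.finsetProd fun j _ => DifferentiableAt.hasFDerivAt ?_).differentiableAt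
  exact ((differentiableAt_const _).sub ((differentiableAt_apply j ζ).smul_const 1)).inverse (hζ j)

theorem stmt_1_general (n : ℕ) (K : Fin n → Set ℂ)
    (hcpt : ∀ j, IsCompact (K j))
    (u : C(↥(Set.univ.pi K), ℂ) →L[ℂ] ℂ)
    (g : (Fin n → ℂ) → C(↥(Set.univ.pi K), ℂ))
    (hg : ∀ ζ : Fin n → ℂ, (∀ j, ζ j ∉ K j) →
      ∀ z : ↥(Set.univ.pi K), g ζ z = ∏ j, ((z : Fin n → ℂ) j - ζ j)⁻¹) :
    DifferentiableOn ℂ (fun ζ => u (g ζ)) {ζ : Fin n → ℂ | ∀ j, ζ j ∉ K j} := by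
  have : CompactSpace (Set.univ.pi K) := isCompact_iff_compactSpace.mp (isCompact_univ_pi hcpt)
  set Ω := {ζ : Fin n → ℂ | ∀ j, ζ j ∉ K j}
  let coord (j : Fin n) : C(Set.univ.pi K, ℂ) :=
    ⟨fun z => (z : Fin n → ℂ) j, (continuous_apply j).comp continuous_subtype_val⟩
  have coord_sub_apply (j : Fin n) (c : ℂ) (z : Set.univ.pi K) :
      (coord j - c • 1) z = (z : Fin n → ℂ) j - c := by
    simp [coord]
  have hunit : ∀ ζ ∈ Ω, ∀ j, IsUnit (coord j - ζ j • 1) := fun ζ hζ j =>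
    (ContinuousMap.isUnit_iff_forall_ne_zero _).mpr fun z hz =>
      hζ j (sub_eq_zero.mp ((coord_sub_apply j _ z).symm.trans hz) ▸ z.2 j (Set.mem_univ j))
  have hg_eq : ∀ ζ ∈ Ω, g ζ = ∏ j, Ring.inverse (coord j - ζ j • 1) := fun ζ hζ => by
    ext z
    simp only [hg ζ hζ, ContinuousMap.prod_apply, ContinuousMap.ringInverse_apply (hunit ζ hζ _),
      coord_sub_apply]
  intro ζ hζ
  have hdiff := u.differentiableAt.comp ζ
    (differentiableAt_prod_ringInverse_sub_smul_one coord (hunit ζ hζ))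
  exact hdiff.differentiableWithinAt.congr (fun ζ' hζ' => congrArg u (hg_eq ζ' hζ'))
    (congrArg u (hg_eq ζ hζ))

/-- For a continuous linear functional `u` on `C(K, ℂ)`, where
`K = K₁ × ⋯ × Kₙ` is a product of nonempty compact subsets of `ℂ`, the function
`ũ(λ) = u(z ↦ ∏ⱼ (zⱼ - λⱼ)⁻¹)` is holomorphic on `{λ | ∀ j, λⱼ ∉ Kⱼ}`. -/
theorem stmt_1 (n : ℕ) (K : Fin n → Set ℂ)
    (hne : ∀ j, (K j).Nonempty) (hcpt : ∀ j, IsCompact (K j))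
    (u : C(↥(Set.univ.pi K), ℂ) →L[ℂ] ℂ)
    (g : (Fin n → ℂ) → C(↥(Set.univ.pi K), ℂ))
    (hg : ∀ ζ : Fin n → ℂ, (∀ j, ζ j ∉ K j) →
      ∀ z : ↥(Set.univ.pi K), g ζ z = ∏ j, ((z : Fin n → ℂ) j - ζ j)⁻¹) :
    DifferentiableOn ℂ (fun ζ => u (g ζ)) {ζ : Fin n → ℂ | ∀ j, ζ j ∉ K j} :=
  stmt_1_general n K hcpt u g hg
end

section
/- Let K_1,…,K_n ⊆ ℂ be nonempty compact sets, K := K_1 × ⋯ × K_n, and let u : C(K, ℂ) →L[ℂ] ℂ be a continuous linear functional. Define ũ(λ) := u(z ↦ ∏_{j=1}^n (z_j − λ_j)⁻¹) for λ in the open set Ω := {λ ∈ ℂⁿ : λ_j ∉ K_j for every j}. Then for every λ ∈ Ω and every index j, the function t ↦ ũ(λ_1,…,λ_{j−1}, t, λ_{j+1},…,λ_n) is complex differentiable at t = λ_j, and its derivative there equals u(z ↦ (z_j − λ_j)⁻² · ∏_{i ≠ j} (z_i − λ_i)⁻¹). -/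
/-!
In the Banach algebra `C(K, ℂ)` the coordinate function `a = (z ↦ z_j)` has spectrum contained
in `K_j`, and `t ↦ (z ↦ (z_j - t)⁻¹)` is, up to sign, its resolvent `t ↦ (t - a)⁻¹`. Near `λ_j`
the map `t ↦ ∏_i (z_i - λ_i[j ↦ t])⁻¹` is therefore the resolvent times a fixed element, so it is
differentiable with derivative `-(λ_j - a)⁻² ·` that element, by the standard derivative of the
resolvent. Composing with the continuous linear functional `u` gives the claim.
-/

open Filter Topology Finset

theorem Finset.prod_apply_update {ι α M : Type*} [Fintype ι] [DecidableEq ι] [CommMonoid M]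
    (f : ι → α → M) (ζ : ι → α) (j : ι) (t : α) :
    ∏ i, f i (Function.update ζ j t i) = f j t * ∏ i ∈ univ.erase j, f i (ζ i) := by
  simp_rw [Function.apply_update f, prod_update_of_mem (mem_univ j), sdiff_singleton_eq_erase]

namespace ContinuousMap

variable {X 𝕜 : Type*} [TopologicalSpace X] [NormedField 𝕜]

theorem mem_resolventSet_iff_notMem_range [CompleteSpace 𝕜] {f : C(X, 𝕜)} {c : 𝕜} :
    c ∈ resolventSet 𝕜 f ↔ c ∉ Set.range f := by
  rw [← spectrum_eq_range, spectrum, Set.notMem_compl_iff]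

theorem resolvent_apply {f : C(X, 𝕜)} {c : 𝕜} (hc : c ∈ resolventSet 𝕜 f) (x : X) :
    resolvent f c x = (c - f x)⁻¹ :=
  eq_inv_of_mul_eq_one_right <| by
    simpa [resolvent] using congr($(Ring.mul_inverse_cancel _ hc) x)

end ContinuousMap

section ProductOfResolvents

variable {ι 𝕜 : Type*} [NormedField 𝕜] {K : ι → Set 𝕜}

def piCoord (K : ι → Set 𝕜) (j : ι) : C(Set.univ.pi K, 𝕜) :=
  (ContinuousMap.eval j).restrict _

@[simp]
theorem piCoord_apply (j : ι) (z : Set.univ.pi K) : piCoord K j z = (z : ι → 𝕜) j := rfl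

theorem mem_resolventSet_piCoord [CompleteSpace 𝕜] {j : ι} {t : 𝕜} (ht : t ∉ K j) :
    t ∈ resolventSet 𝕜 (piCoord K j) :=
  ContinuousMap.mem_resolventSet_iff_notMem_range.2 fun ⟨z, hz⟩ => ht (hz ▸ z.2 j trivial)

theorem apply_update_eq_inv_mul_prod_erase [Fintype ι] [DecidableEq ι] {g : (ι → 𝕜) → C(Set.univ.pi K, 𝕜)}
    (hg : ∀ ζ : ι → 𝕜, (∀ j, ζ j ∉ K j) →
      ∀ z : Set.univ.pi K, g ζ z = ∏ j, ((z : ι → 𝕜) j - ζ j)⁻¹)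
    {ζ : ι → 𝕜} (hζ : ∀ i, ζ i ∉ K i) {j : ι} {t : 𝕜} (ht : t ∉ K j) (z : Set.univ.pi K) :
    g (Function.update ζ j t) z =
      ((z : ι → 𝕜) j - t)⁻¹ * ∏ i ∈ univ.erase j, ((z : ι → 𝕜) i - ζ i)⁻¹ := by
  have hupd : ∀ i, Function.update ζ j t i ∉ K i := by
    intro i
    rcases eq_or_ne i j with rfl | hij <;> simp [*]
  rw [hg _ hupd, prod_apply_update (fun i w => ((z : ι → 𝕜) i - w)⁻¹)]

theorem apply_eq_inv_mul_prod_erase [Fintype ι] [DecidableEq ι]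
    {g : (ι → 𝕜) → C(Set.univ.pi K, 𝕜)}
    (hg : ∀ ζ : ι → 𝕜, (∀ j, ζ j ∉ K j) →
      ∀ z : Set.univ.pi K, g ζ z = ∏ j, ((z : ι → 𝕜) j - ζ j)⁻¹)
    {ζ : ι → 𝕜} (hζ : ∀ i, ζ i ∉ K i) (j : ι) (z : Set.univ.pi K) :
    g ζ z = ((z : ι → 𝕜) j - ζ j)⁻¹ * ∏ i ∈ univ.erase j, ((z : ι → 𝕜) i - ζ i)⁻¹ := by
  rw [hg _ hζ, mul_prod_erase _ (fun i => ((z : ι → 𝕜) i - ζ i)⁻¹) (mem_univ j)]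

theorem apply_update_eq_resolvent_mul [Fintype ι] [DecidableEq ι] [CompleteSpace 𝕜]
    {g : (ι → 𝕜) → C(Set.univ.pi K, 𝕜)}
    (hg : ∀ ζ : ι → 𝕜, (∀ j, ζ j ∉ K j) →
      ∀ z : Set.univ.pi K, g ζ z = ∏ j, ((z : ι → 𝕜) j - ζ j)⁻¹)
    {ζ : ι → 𝕜} (hζ : ∀ i, ζ i ∉ K i) {j : ι} {t : 𝕜} (ht : t ∉ K j) :
    g (Function.update ζ j t) =
      resolvent (piCoord K j) t * ((algebraMap 𝕜 _ (ζ j) - piCoord K j) * g ζ) := by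
  ext z
  have hzt : (z : ι → 𝕜) j ≠ t := ne_of_mem_of_not_mem (z.2 j trivial) ht
  have hzζ : (z : ι → 𝕜) j ≠ ζ j := ne_of_mem_of_not_mem (z.2 j trivial) (hζ j)
  simp only [ContinuousMap.mul_apply, ContinuousMap.sub_apply, algebraMap_apply, smul_eq_mul,
    mul_one, piCoord_apply, ContinuousMap.resolvent_apply (mem_resolventSet_piCoord ht),
    apply_update_eq_inv_mul_prod_erase hg hζ ht, apply_eq_inv_mul_prod_erase hg hζ j]
  field_simp [sub_ne_zero.2 hzt, sub_ne_zero.2 hzt.symm, sub_ne_zero.2 hzζ]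
  ring

end ProductOfResolvents

theorem stmt_2_general (n : ℕ) (K : Fin n → Set ℂ)
    (hcpt : ∀ j, IsCompact (K j))
    (u : C(↥(Set.univ.pi K), ℂ) →L[ℂ] ℂ)
    (g : (Fin n → ℂ) → C(↥(Set.univ.pi K), ℂ))
    (hg : ∀ ζ : Fin n → ℂ, (∀ j, ζ j ∉ K j) →
      ∀ z : ↥(Set.univ.pi K), g ζ z = ∏ j, ((z : Fin n → ℂ) j - ζ j)⁻¹) :
    ∀ ζ : Fin n → ℂ, (∀ j, ζ j ∉ K j) → ∀ j : Fin n,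
      ∀ h : C(↥(Set.univ.pi K), ℂ),
        (∀ z : ↥(Set.univ.pi K), h z =
          (((z : Fin n → ℂ) j - ζ j) ^ 2)⁻¹ *
            ∏ i ∈ Finset.univ.erase j, ((z : Fin n → ℂ) i - ζ i)⁻¹) →
        HasDerivAt (fun t : ℂ => u (g (Function.update ζ j t))) (u h) (ζ j) := by
  intro ζ hζ j h hh
  have : CompactSpace (Set.univ.pi K) := isCompact_iff_compactSpace.mp (isCompact_univ_pi hcpt)
  set P := (algebraMap ℂ _ (ζ j) - piCoord K j) * g ζ
  have hev : (fun t => g (Function.update ζ j t)) =ᶠ[𝓝 (ζ j)]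
      fun t => resolvent (piCoord K j) t * P :=
    eventually_of_mem ((hcpt j).isClosed.isOpen_compl.mem_nhds (hζ j))
      fun _ ht => apply_update_eq_resolvent_mul hg hζ ht
  have hP : -resolvent (piCoord K j) (ζ j) ^ 2 * P = h := by
    ext z
    have hzζ : (z : Fin n → ℂ) j ≠ ζ j := ne_of_mem_of_not_mem (z.2 j trivial) (hζ j)
    simp only [P, ContinuousMap.mul_apply, ContinuousMap.sub_apply, ContinuousMap.neg_apply,
      ContinuousMap.pow_apply, algebraMap_apply, smul_eq_mul, mul_one, piCoord_apply,
      ContinuousMap.resolvent_apply (mem_resolventSet_piCoord (hζ j)),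
      apply_eq_inv_mul_prod_erase hg hζ j, hh]
    field_simp [sub_ne_zero.2 hzζ]
    ring
  rw [← hP]
  exact u.hasFDerivAt.comp_hasDerivAt _
    (((spectrum.hasDerivAt_resolvent_const_left (mem_resolventSet_piCoord (hζ j))).mul_const P)
      |>.congr_of_eventuallyEq hev)

/-- The partial derivative of `ũ(λ) = u(z ↦ ∏ⱼ (zⱼ - λⱼ)⁻¹)` with respect
to the `j`-th coordinate at a point `λ` with `λᵢ ∉ Kᵢ` for all `i` exists and equals
`u(z ↦ (zⱼ - λⱼ)⁻² ∏_{i ≠ j} (zᵢ - λᵢ)⁻¹)`. -/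
theorem stmt_2 (n : ℕ) (K : Fin n → Set ℂ)
    (hne : ∀ j, (K j).Nonempty) (hcpt : ∀ j, IsCompact (K j))
    (u : C(↥(Set.univ.pi K), ℂ) →L[ℂ] ℂ)
    (g : (Fin n → ℂ) → C(↥(Set.univ.pi K), ℂ))
    (hg : ∀ ζ : Fin n → ℂ, (∀ j, ζ j ∉ K j) →
      ∀ z : ↥(Set.univ.pi K), g ζ z = ∏ j, ((z : Fin n → ℂ) j - ζ j)⁻¹) :
    ∀ ζ : Fin n → ℂ, (∀ j, ζ j ∉ K j) → ∀ j : Fin n,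
      ∀ h : C(↥(Set.univ.pi K), ℂ),
        (∀ z : ↥(Set.univ.pi K), h z =
          (((z : Fin n → ℂ) j - ζ j) ^ 2)⁻¹ *
            ∏ i ∈ Finset.univ.erase j, ((z : Fin n → ℂ) i - ζ i)⁻¹) →
        HasDerivAt (fun t : ℂ => u (g (Function.update ζ j t))) (u h) (ζ j) :=
  stmt_2_general n K hcpt u g hg
end

section
/- Let r, s, R ∈ (ℝ_{>0})ⁿ with r_j < s_j < R_j for every j, let K := {z ∈ ℂⁿ : |z_j| ≤ r_j for all j} be the closed polydisc of polyradius r, and let u : C(K, ℂ) →L[ℂ] ℂ be a continuous linear functional. Define ũ(λ) := u(z ↦ ∏_{j=1}^n (z_j − λ_j)⁻¹) for λ with |λ_j| > r_j for all j. Then for every function f : ℂⁿ → ℂ holomorphic on the open polydisc P(R), one has u(f|_K) = ((−1)ⁿ/(2πi)ⁿ) ∯_{|λ_j|=s_j} ũ(λ) f(λ) dλ. -/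
/-
Iterating the one-variable Cauchy formula over the coordinates gives, for every `z` in the closed
polydisc `K`, `∯ ∏ⱼ (ζⱼ - zⱼ)⁻¹ f(ζ) dζ = (2πi)ⁿ f(z)`. Read pointwise in `z`, this says that the
`C(K, ℂ)`-valued torus integral of `ζ ↦ f(ζ) • kζ`, where `kζ = ∏ⱼ (· - ζⱼ)⁻¹` is the Cauchy kernel,
equals `(-1)ⁿ (2πi)ⁿ f|_K`. A continuous linear functional commutes with this Bochner integral, and
`u(kζ) = ũ(ζ)`.
-/

open Complex Metric
open scoped Real

theorem Finset.prod_inv_sub_comm {ι K : Type*} [Fintype ι] [Field K] (a b : ι → K) :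
    ∏ j, (a j - b j)⁻¹ = (-1) ^ Fintype.card ι * ∏ j, (b j - a j)⁻¹ := by
  simp_rw [← neg_sub (b _) (a _), inv_neg, Finset.prod_neg, Finset.card_univ]

section Torus

variable {n : ℕ} {E F : Type*} [NormedAddCommGroup E] [NormedSpace ℂ E]

theorem continuous_torusMap (c : Fin n → ℂ) (R : Fin n → ℝ) : Continuous (torusMap c R) := by
  unfold torusMap; fun_prop

theorem norm_torusMap_sub_center (c : Fin n → ℂ) (R θ : Fin n → ℝ) (j : Fin n) :
    ‖torusMap c R θ j - c j‖ = |R j| := by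
  simp [torusMap, norm_exp_ofReal_mul_I]

theorem torusIntegral_congr {f g : (Fin n → ℂ) → E} {c : Fin n → ℂ} {R : Fin n → ℝ}
    (h : ∀ θ, f (torusMap c R θ) = g (torusMap c R θ)) :
    (∯ x in T(c, R), f x) = ∯ x in T(c, R), g x := by
  simp only [torusIntegral, h]

theorem ContinuousLinearMap.torusIntegral_comp_comm [CompleteSpace E] [NormedAddCommGroup F]
    [NormedSpace ℂ F] [CompleteSpace F] (L : E →L[ℂ] F) {f : (Fin n → ℂ) → E} {c : Fin n → ℂ}
    {R : Fin n → ℝ} (hf : TorusIntegrable f c R) :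
    (∯ x in T(c, R), L (f x)) = L (∯ x in T(c, R), f x) := by
  simp only [torusIntegral, ← L.map_smul]
  exact L.integral_comp_comm hf.function_integrable

theorem torusMap_apply_ne_of_norm_sub_lt {c z : Fin n → ℂ} {s : Fin n → ℝ} {j : Fin n}
    (hz : ‖z j - c j‖ < s j) (θ : Fin n → ℝ) : torusMap c s θ j ≠ z j := by
  intro h
  have := norm_torusMap_sub_center c s θ j
  rw [h] at this
  exact (hz.trans_le (le_abs_self _)).ne this

end Torus

section Cauchy

variable {n : ℕ} {E : Type*} [NormedAddCommGroup E] [NormedSpace ℂ E]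

theorem Fin.cons_mem_polydisc_iff {c : Fin (n + 1) → ℂ} {R : Fin (n + 1) → ℝ} {x : ℂ}
    {w : Fin n → ℂ} :
    Fin.cons x w ∈ {z : Fin (n + 1) → ℂ | ∀ j, ‖z j - c j‖ < R j} ↔
      ‖x - c 0‖ < R 0 ∧ w ∈ {z : Fin n → ℂ | ∀ j, ‖z j - c j.succ‖ < R j.succ} := by
  simp [Fin.forall_fin_succ]

theorem torusIntegrable_prod_inv_sub_smul {c z : Fin n → ℂ} {s R : Fin n → ℝ}
    (hsR : ∀ j, s j < R j) {f : (Fin n → ℂ) → E}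
    (hf : ContinuousOn f {z | ∀ j, ‖z j - c j‖ < R j}) (hz : ∀ j, ‖z j - c j‖ < s j) :
    TorusIntegrable (fun ζ => (∏ j, (ζ j - z j)⁻¹) • f ζ) c s := by
  have hs : ∀ j, |s j| = s j := fun j => abs_of_pos ((norm_nonneg _).trans_lt (hz j))
  refine (Continuous.continuousOn ?_).integrableOn_compact isCompact_Icc
  refine Continuous.smul ?_ (hf.comp_continuous (continuous_torusMap c s) fun θ j => ?_)
  · exact continuous_finsetProd _ fun j _ =>
      (((continuous_apply j).comp (continuous_torusMap c s)).sub continuous_const).inv₀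
        fun θ => sub_ne_zero.2 (torusMap_apply_ne_of_norm_sub_lt (hz j) θ)
  · rw [norm_torusMap_sub_center, hs]
    exact hsR j

theorem torusIntegral_prod_inv_sub_smul [CompleteSpace E] {c z : Fin n → ℂ} {s R : Fin n → ℝ}
    (hsR : ∀ j, s j < R j) {f : (Fin n → ℂ) → E}
    (hf : DifferentiableOn ℂ f {z | ∀ j, ‖z j - c j‖ < R j}) (hz : ∀ j, ‖z j - c j‖ < s j) :
    (∯ ζ in T(c, s), (∏ j, (ζ j - z j)⁻¹) • f ζ) = (2 * π * I) ^ n • f z := by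
  induction n with
  | zero =>
    rw [torusIntegral_dim0, Finset.univ_eq_empty, Finset.prod_empty, one_smul, pow_zero,
      one_smul, Subsingleton.elim c z]
  | succ n ih =>
    have hslice : ∀ x ∈ sphere (c 0) (s 0),
        (∯ y in T(c ∘ Fin.succ, s ∘ Fin.succ),
          (∏ j, ((Fin.cons x y : Fin (n + 1) → ℂ) j - z j)⁻¹) • f (Fin.cons x y)) =
          (2 * π * I) ^ n • (x - z 0)⁻¹ • f (Fin.cons x (Fin.tail z)) := by
      intro x hx
      have hfx : DifferentiableOn ℂ (fun y => (x - z 0)⁻¹ • f (Fin.cons x y))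
          {w | ∀ j, ‖w j - c j.succ‖ < R j.succ} :=
        (hf.comp (by fun_prop) fun y hy =>
          Fin.cons_mem_polydisc_iff.2
            ⟨(mem_sphere_iff_norm.1 hx).trans_lt (hsR 0), hy⟩).const_smul _
      calc _ = ∯ y in T(c ∘ Fin.succ, s ∘ Fin.succ),
              (∏ j, (y j - Fin.tail z j)⁻¹) • (x - z 0)⁻¹ • f (Fin.cons x y) := by
            congr 1; funext y
            simp only [Fin.prod_univ_succ, Fin.cons_zero, Fin.cons_succ, Fin.tail, mul_smul]
            exact smul_comm _ _ _
        _ = _ := ih (fun j => hsR j.succ) hfx fun j => hz j.succ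
    have hf0 : DifferentiableOn ℂ (fun x => f (Fin.cons x (Fin.tail z))) (closedBall (c 0) (s 0)) :=
      hf.comp (by fun_prop) fun x hx =>
        Fin.cons_mem_polydisc_iff.2 ⟨(mem_closedBall_iff_norm.1 hx).trans_lt (hsR 0),
          fun j => (hz j.succ).trans (hsR j.succ)⟩
    rw [torusIntegral_succ (torusIntegrable_prod_inv_sub_smul hsR hf.continuousOn hz),
      circleIntegral.integral_congr ((norm_nonneg _).trans_lt (hz 0)).le hslice,
      circleIntegral.integral_smul, hf0.circleIntegral_sub_inv_smul (mem_ball_iff_norm.2 (hz 0)),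
      Fin.cons_self_tail, smul_smul, pow_succ]

end Cauchy

section ContinuousFunctions

variable {n : ℕ} {K : Set (Fin n → ℂ)} {c : Fin n → ℂ} {s R : Fin n → ℝ}
  {g : (Fin n → ℂ) → C(K, ℂ)} {f : (Fin n → ℂ) → ℂ}

theorem isCompact_closedPolydisc (r : Fin n → ℝ) :
    IsCompact {z : Fin n → ℂ | ∀ j, ‖z j‖ ≤ r j} := by
  simpa [Set.pi, mem_closedBall_zero_iff] using
    isCompact_univ_pi fun j => isCompact_closedBall (0 : ℂ) (r j)

theorem continuous_comp_torusMap_of_apply_eq_prod_inv_sub (hK : ∀ z ∈ K, ∀ j, ‖z j - c j‖ < s j)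
    (hg : ∀ θ (z : K), g (torusMap c s θ) z = ∏ j, ((z : Fin n → ℂ) j - torusMap c s θ j)⁻¹) :
    Continuous fun θ => g (torusMap c s θ) := by
  refine ContinuousMap.continuous_of_continuous_uncurry _ ?_
  have huncurry : Function.uncurry (fun θ => ⇑(g (torusMap c s θ))) =
      fun p : (Fin n → ℝ) × K => ∏ j, ((p.2 : Fin n → ℂ) j - torusMap c s p.1 j)⁻¹ :=
    funext fun p => hg p.1 p.2
  rw [huncurry]
  exact continuous_finsetProd _ fun j _ =>
    (((continuous_apply j).comp (continuous_subtype_val.comp continuous_snd)).sub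
      ((continuous_apply j).comp ((continuous_torusMap c s).comp continuous_fst))).inv₀ fun p =>
        sub_ne_zero.2 (torusMap_apply_ne_of_norm_sub_lt (hK _ p.2.2 j) p.1).symm

theorem torusIntegrable_smul_of_apply_eq_prod_inv_sub [CompactSpace K] (hs : ∀ j, 0 ≤ s j)
    (hsR : ∀ j, s j < R j) (hK : ∀ z ∈ K, ∀ j, ‖z j - c j‖ < s j)
    (hg : ∀ θ (z : K), g (torusMap c s θ) z = ∏ j, ((z : Fin n → ℂ) j - torusMap c s θ j)⁻¹)
    (hf : ContinuousOn f {z | ∀ j, ‖z j - c j‖ < R j}) :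
    TorusIntegrable (fun ζ => f ζ • g ζ) c s :=
  ((hf.comp_continuous (continuous_torusMap c s) fun θ j => by
      simpa [norm_torusMap_sub_center, abs_of_nonneg (hs j)] using hsR j).smul
    (continuous_comp_torusMap_of_apply_eq_prod_inv_sub hK hg)).integrableOn_Icc

theorem torusIntegral_smul_apply_of_apply_eq_prod_inv_sub [CompactSpace K]
    (hsR : ∀ j, s j < R j) (hK : ∀ z ∈ K, ∀ j, ‖z j - c j‖ < s j)
    (hg : ∀ θ (z : K), g (torusMap c s θ) z = ∏ j, ((z : Fin n → ℂ) j - torusMap c s θ j)⁻¹)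
    (hf : DifferentiableOn ℂ f {z | ∀ j, ‖z j - c j‖ < R j}) (z : K) :
    (∯ ζ in T(c, s), f ζ • g ζ) z = (-1) ^ n * (2 * π * I) ^ n * f z := by
  have hint := torusIntegrable_smul_of_apply_eq_prod_inv_sub
    (fun j => (norm_nonneg _).trans (hK z z.2 j).le) hsR hK hg hf.continuousOn
  rw [← ContinuousMap.evalCLM_apply ℂ z, ← (ContinuousMap.evalCLM ℂ z).torusIntegral_comp_comm hint,
    torusIntegral_congr (g := fun ζ => (-1) ^ n * ((∏ j, (ζ j - (z : Fin n → ℂ) j)⁻¹) • f ζ))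
      fun θ => ?_, torusIntegral_const_mul, torusIntegral_prod_inv_sub_smul hsR hf (hK z z.2),
    smul_eq_mul, ← mul_assoc]
  rw [ContinuousMap.evalCLM_apply, ContinuousMap.smul_apply, hg, Finset.prod_inv_sub_comm,
    Fintype.card_fin, smul_eq_mul, smul_eq_mul]
  ring

end ContinuousFunctions

/-- For a continuous linear functional `u` on `C(K, ℂ)`, with `K` the
closed polydisc of polyradius `r`, and `f` holomorphic on the open polydisc `P(R)`
with `rⱼ < sⱼ < Rⱼ`, the action of `u` on `f` is recovered from `ũ` by an iterated
contour (torus) integral over `{|λⱼ| = sⱼ}`. -/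
theorem stmt_4 (n : ℕ) (r s R : Fin n → ℝ)
    (hr : ∀ j, 0 < r j) (hrs : ∀ j, r j < s j) (hsR : ∀ j, s j < R j)
    (u : C(↥{z : Fin n → ℂ | ∀ j, ‖z j‖ ≤ r j}, ℂ) →L[ℂ] ℂ)
    (g : (Fin n → ℂ) → C(↥{z : Fin n → ℂ | ∀ j, ‖z j‖ ≤ r j}, ℂ))
    (hg : ∀ ζ : Fin n → ℂ, (∀ j, r j < ‖ζ j‖) →
      ∀ z : ↥{z : Fin n → ℂ | ∀ j, ‖z j‖ ≤ r j}, g ζ z = ∏ j, ((z : Fin n → ℂ) j - ζ j)⁻¹)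
    (f : (Fin n → ℂ) → ℂ)
    (hf : DifferentiableOn ℂ f {z : Fin n → ℂ | ∀ j, ‖z j‖ < R j})
    (fK : C(↥{z : Fin n → ℂ | ∀ j, ‖z j‖ ≤ r j}, ℂ))
    (hfK : ∀ z : ↥{z : Fin n → ℂ | ∀ j, ‖z j‖ ≤ r j}, fK z = f z) :
    u fK = (-1 : ℂ) ^ n / (2 * Real.pi * Complex.I) ^ n *
      torusIntegral (fun ζ => u (g ζ) * f ζ) 0 s := by
  have := isCompact_iff_compactSpace.1 (isCompact_closedPolydisc r)
  have hs : ∀ j, 0 < s j := fun j => (hr j).trans (hrs j)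
  have hf0 : DifferentiableOn ℂ f {z | ∀ j, ‖z j - (0 : Fin n → ℂ) j‖ < R j} := by simpa using hf
  have hK : ∀ z ∈ {z : Fin n → ℂ | ∀ j, ‖z j‖ ≤ r j}, ∀ j, ‖z j - (0 : Fin n → ℂ) j‖ < s j :=
    fun z hz j => by simpa using (hz j).trans_lt (hrs j)
  have hT : ∀ θ j, ‖torusMap 0 s θ j‖ = s j := fun θ j => by
    simpa [abs_of_pos (hs j)] using norm_torusMap_sub_center 0 s θ j
  have hgT : ∀ θ z, g (torusMap 0 s θ) z = ∏ j, ((z : Fin n → ℂ) j - torusMap 0 s θ j)⁻¹ :=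
    fun θ => hg _ fun j => hT θ j ▸ hrs j
  have hint := torusIntegrable_smul_of_apply_eq_prod_inv_sub (fun j => (hs j).le) hsR hK hgT
    hf0.continuousOn
  have hcauchy : (∯ ζ in T(0, s), f ζ • g ζ) = ((-1) ^ n * (2 * π * I) ^ n) • fK := by
    ext z
    rw [torusIntegral_smul_apply_of_apply_eq_prod_inv_sub hsR hK hgT hf0, ContinuousMap.smul_apply,
      hfK, smul_eq_mul]
  have hswap : (∯ ζ in T(0, s), u (g ζ) * f ζ) = (-1) ^ n * (2 * π * I) ^ n * u fK := by
    calc (∯ ζ in T(0, s), u (g ζ) * f ζ) = ∯ ζ in T(0, s), u (f ζ • g ζ) := by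
          simp only [map_smul, smul_eq_mul, mul_comm]
      _ = _ := by rw [u.torusIntegral_comp_comm hint, hcauchy, map_smul, smul_eq_mul]
  have h2πI : (2 * π * I : ℂ) ^ n ≠ 0 := pow_ne_zero _ (by simp [Real.pi_ne_zero, I_ne_zero])
  rw [hswap]
  field_simp
  norm_num [← pow_mul]
end

section
/- Let G₁ = G₁⁽¹⁾ × ⋯ × G₁⁽ⁿ⁾ ⊆ ℂⁿ with each G₁⁽ʲ⁾ ⊆ ℂ nonempty and open, and let G₂ ⊆ ℂⁿ be open. Let A : ((Fin n → ℂ) → ℂ) →ₗ[ℂ] ((Fin n → ℂ) → ℂ) be a ℂ-linear map such that: (i) for every f holomorphic on G₁, A f is holomorphic on G₂; and (ii) for every compact set K ⊆ G₂ there exist a compact set L ⊆ G₁ and C > 0 such that ‖A f‖_K ≤ C ‖f‖_L for every f holomorphic on G₁. Then the function (ζ, z) ↦ A(w ↦ ∏_{j=1}^n (w_j − ζ_j)⁻¹)(z) is holomorphic (jointly, as a function of 2n complex variables) on the open set {ζ ∈ ℂⁿ : ζ_j ∉ closure(G₁⁽ʲ⁾) for all j} × G₂. -/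
/-!
Fix `(ζ₀, z₀)`. On the cylinder `G₁` all `‖wⱼ - ζ₀ⱼ‖` are at least some `d > 0`, so for
`‖ζⱼ - ζ₀ⱼ‖ ≤ d / 2` the geometric series in each variable give
`∏ⱼ (wⱼ - ζⱼ)⁻¹ = ∑_α (ζ - ζ₀)^α ∏ⱼ (wⱼ - ζ₀ⱼ)^-(αⱼ+1)` with a summable majorant, uniformly
in `w ∈ G₁`. The estimate (ii) on a closed ball `K` around `z₀` lets `A` pass through this
uniformly convergent sum, and it also bounds the terms `(ζ - ζ₀)^α · A(∏ⱼ (wⱼ - ζ₀ⱼ)^-(αⱼ+1))(z)`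
on `ball ζ₀ (d / 2) × K` by a summable majorant. A series of holomorphic functions of several
variables with a summable majorant is holomorphic, because the Cauchy estimates (here: the
Schwarz lemma) bound the derivatives of the terms by a summable majorant too.
-/

open Set Metric Filter Topology

theorem summable_pi_prod_of_nonneg {ι κ : Type*} [Fintype ι] {f : ι → κ → ℝ}
    (hf0 : ∀ i m, 0 ≤ f i m) (hf : ∀ i, Summable (f i)) :
    Summable fun α : ι → κ => ∏ i, f i (α i) := by
  classical
  refine summable_of_sum_le (c := ∏ i, ∑' m, f i m)
    (fun α => Finset.prod_nonneg fun i _ => hf0 i (α i)) fun s => ?_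
  calc ∑ α ∈ s, ∏ i, f i (α i)
      ≤ ∑ α ∈ Fintype.piFinset fun i => s.image (· i), ∏ i, f i (α i) :=
        Finset.sum_le_sum_of_subset_of_nonneg
          (fun α hα => Fintype.mem_piFinset.2 fun i => Finset.mem_image_of_mem _ hα)
          (fun α _ _ => Finset.prod_nonneg fun i _ => hf0 i (α i))
    _ = ∏ i, ∑ m ∈ s.image (· i), f i m := (Finset.prod_univ_sum _ _).symm
    _ ≤ ∏ i, ∑' m, f i m :=
        Finset.prod_le_prod (fun i _ => Finset.sum_nonneg fun m _ => hf0 i m)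
          fun i _ => (hf i).sum_le_tsum _ fun m _ => hf0 i m

theorem hasSum_pi_prod {ι κ R : Type*} [Fintype ι] [NormedCommRing R] [NormOneClass R]
    [CompleteSpace R] {f : ι → κ → R} (hf : ∀ i, Summable fun m => ‖f i m‖) :
    HasSum (fun α : ι → κ => ∏ i, f i (α i)) (∏ i, ∑' m, f i m) := by
  classical
  have hsum : Summable fun α : ι → κ => ∏ i, f i (α i) :=
    (summable_pi_prod_of_nonneg (fun i m => norm_nonneg (f i m)) hf).of_norm_bounded
      fun α => Finset.norm_prod_le _ _
  have hcube : Tendsto (fun t : Finset κ => Fintype.piFinset fun _ : ι => t) atTop atTop :=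
    tendsto_atTop_atTop.2 fun s => ⟨s.biUnion fun α => Finset.univ.image α,
      fun t ht α hα => Fintype.mem_piFinset.2 fun i =>
        ht (Finset.mem_biUnion.2 ⟨α, hα, Finset.mem_image_of_mem _ (Finset.mem_univ i)⟩)⟩
  have hlim : Tendsto (fun t : Finset κ => ∏ i, ∑ m ∈ t, f i m) atTop (𝓝 (∏ i, ∑' m, f i m)) :=
    tendsto_finsetProd _ fun i _ => (hf i).of_norm.hasSum
  convert hsum.hasSum
  refine tendsto_nhds_unique hlim ((hsum.hasSum.comp hcube).congr fun t => ?_)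
  exact (Finset.prod_univ_sum _ _).symm

theorem hasSum_pow_mul_inv_pow_succ {𝕜 : Type*} [NormedField 𝕜] [CompleteSpace 𝕜] {x y : 𝕜}
    (h : ‖x‖ < ‖y‖) : HasSum (fun m : ℕ => x ^ m * (y ^ (m + 1))⁻¹) (y - x)⁻¹ := by
  have hy : y ≠ 0 := norm_pos_iff.1 ((norm_nonneg x).trans_lt h)
  have hxy : ‖x / y‖ < 1 := by rwa [norm_div, div_lt_one (norm_pos_iff.2 hy)]
  have hyx : y - x ≠ 0 := sub_ne_zero.2 fun h' => h.ne (by rw [h'])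
  have := (hasSum_geometric_of_norm_lt_one hxy).mul_right y⁻¹
  rw [show (1 - x / y)⁻¹ * y⁻¹ = (y - x)⁻¹ by field_simp] at this
  exact this.congr_fun fun m => by rw [div_pow, pow_succ]; field_simp

section Kernel

variable {𝕜 ι : Type*} [NormedField 𝕜] [Fintype ι]

theorem hasSum_prod_pow_mul_prod_inv_pow [CompleteSpace 𝕜] {x y : ι → 𝕜}
    (h : ∀ j, ‖x j‖ < ‖y j‖) :
    HasSum (fun α : ι → ℕ => (∏ j, x j ^ α j) * ∏ j, (y j ^ (α j + 1))⁻¹)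
      (∏ j, (y j - x j)⁻¹) := by
  have hnorm : ∀ j, Summable fun m : ℕ => ‖x j ^ m * (y j ^ (m + 1))⁻¹‖ := fun j => by
    simpa only [norm_mul, norm_pow, norm_inv] using
      (hasSum_pow_mul_inv_pow_succ (x := ‖x j‖) (y := ‖y j‖) (by simpa using h j)).summable
  have := hasSum_pi_prod hnorm
  simp only [fun j => (hasSum_pow_mul_inv_pow_succ (h j)).tsum_eq] at this
  exact this.congr_fun fun α => Finset.prod_mul_distrib.symm

theorem norm_prod_pow_le {x : ι → 𝕜} {r : ℝ} (hx : ∀ j, ‖x j‖ ≤ r) (e : ι → ℕ) :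
    ‖∏ j, x j ^ e j‖ ≤ ∏ j, r ^ e j := by
  rw [norm_prod]
  gcongr with j
  rw [norm_pow]
  gcongr
  exact hx j

theorem norm_prod_inv_pow_le {y : ι → 𝕜} {d : ℝ} (hd : 0 < d) (hy : ∀ j, d ≤ ‖y j‖)
    (e : ι → ℕ) : ‖∏ j, (y j ^ e j)⁻¹‖ ≤ ∏ j, (d ^ e j)⁻¹ := by
  rw [norm_prod]
  gcongr with j
  rw [norm_inv, norm_pow]
  gcongr
  exact hy j

end Kernel

section Holomorphic

variable {E F : Type*} [NormedAddCommGroup E] [NormedSpace ℂ E] [NormedAddCommGroup F]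
  [NormedSpace ℂ F]

theorem norm_fderiv_le_of_forall_mem_ball_norm_le {f : E → F} {c : E} {R M : ℝ} (hR : 0 < R)
    (hf : DifferentiableOn ℂ f (ball c R)) (hM : ∀ z ∈ ball c R, ‖f z‖ ≤ M) :
    ‖fderiv ℂ f c‖ ≤ 2 * M / R := by
  refine Complex.norm_fderiv_le_div_of_mapsTo_ball hf (fun z hz => ?_) hR
  rw [mem_closedBall_iff_norm]
  linarith [norm_sub_le (f z) (f c), hM z hz, hM c (mem_ball_self hR)]

theorem differentiableOn_tsum_of_summable_norm [CompleteSpace F] {ι : Type*} {f : ι → E → F}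
    {u : ι → ℝ} {U : Set E} (hu : Summable u) (hf : ∀ i, DifferentiableOn ℂ (f i) U)
    (hU : IsOpen U) (hfu : ∀ i, ∀ x ∈ U, ‖f i x‖ ≤ u i) :
    DifferentiableOn ℂ (fun x => ∑' i, f i x) U := by
  intro x hx
  obtain ⟨ε, hε, hεU⟩ := Metric.isOpen_iff.1 hU x hx
  have hball : ∀ y ∈ ball x (ε / 2), ball y (ε / 2) ⊆ U := fun y hy z hz =>
    hεU (by linarith [mem_ball.1 hy, mem_ball.1 hz, dist_triangle z y x] : dist z x < ε)
  have hfd : ∀ i, ∀ y ∈ ball x (ε / 2), HasFDerivAt (f i) (fderiv ℂ (f i) y) y := fun i y hy =>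
    ((hf i).differentiableAt (hU.mem_nhds (hball y hy (mem_ball_self (by linarith))))).hasFDerivAt
  have hbound : ∀ i, ∀ y ∈ ball x (ε / 2), ‖fderiv ℂ (f i) y‖ ≤ 2 * u i / (ε / 2) :=
    fun i y hy => norm_fderiv_le_of_forall_mem_ball_norm_le (by linarith)
      ((hf i).mono (hball y hy)) fun z hz => hfu i z (hball y hy hz)
  have hx' : x ∈ ball x (ε / 2) := mem_ball_self (by linarith)
  exact (hasFDerivAt_tsum_of_isPreconnected ((hu.mul_left 2).div_const _) isOpen_ball
    (convex_ball x _).isPreconnected hfd hbound hx'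
    (Summable.of_norm_bounded hu fun i => hfu i x hx) hx').differentiableAt.differentiableWithinAt

end Holomorphic

theorem IsCompact.norm_le_mul_of_iSup_norm_le {X Y E F : Type*} [TopologicalSpace X]
    [SeminormedAddCommGroup E] [SeminormedAddCommGroup F] {K : Set X} {L : Set Y}
    {g : X → E} {f : Y → F} {C M : ℝ} (hK : IsCompact K) (hg : ContinuousOn g K)
    (hgf : (⨆ z ∈ K, ‖g z‖) ≤ C * ⨆ w ∈ L, ‖f w‖) (hC : 0 ≤ C) (hM : 0 ≤ M)
    (hfM : ∀ w ∈ L, ‖f w‖ ≤ M) {z : X} (hz : z ∈ K) : ‖g z‖ ≤ C * M := by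
  have hbdd : BddAbove (⋃ z, range fun _ : z ∈ K => ‖g z‖) := by
    obtain ⟨B, hB⟩ := hK.bddAbove_image hg.norm
    refine ⟨B, fun b hb => ?_⟩
    obtain ⟨z, hz, rfl⟩ : ∃ z ∈ K, ‖g z‖ = b := by simpa using hb
    exact hB (mem_image_of_mem _ hz)
  calc ‖g z‖ ≤ ⨆ z ∈ K, ‖g z‖ := le_ciSup₂ (f := fun z (_ : z ∈ K) => ‖g z‖) hbdd z hz
    _ ≤ C * ⨆ w ∈ L, ‖f w‖ := hgf
    _ ≤ C * M := by
      gcongr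
      exact Real.iSup_le (fun w => Real.iSup_le (hfM w) hM) hM

namespace LinearMap

variable {E E' : Type*} [NormedAddCommGroup E] [NormedSpace ℂ E]

/-- `‖A f z‖ ≤ C ‖f‖_L` for every `f` holomorphic on `U`; the sup norm is phrased through
bounds `M` on `L` so that no `⨆` (with its junk value on unbounded sets) is involved. -/
def SupBoundedAt (A : (E → ℂ) →ₗ[ℂ] (E' → ℂ)) (U L : Set E) (C : ℝ) (z : E') : Prop :=
  ∀ f, DifferentiableOn ℂ f U → ∀ M, 0 ≤ M → (∀ w ∈ L, ‖f w‖ ≤ M) → ‖A f z‖ ≤ C * M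

variable {A : (E → ℂ) →ₗ[ℂ] (E' → ℂ)} {U L : Set E} {z : E'} {C : ℝ}

theorem tendsto_apply_of_tendstoUniformlyOn {ι : Type*} {l : Filter ι}
    (hA : A.SupBoundedAt U L C z) (hC : 0 < C) {S : ι → E → ℂ} {k : E → ℂ}
    (hS : ∀ i, DifferentiableOn ℂ (S i) U) (hk : DifferentiableOn ℂ k U)
    (hSk : TendstoUniformlyOn S k l L) :
    Tendsto (fun i => A (S i) z) l (𝓝 (A k z)) := by
  rw [Metric.tendsto_nhds]
  intro ε hε
  filter_upwards [Metric.tendstoUniformlyOn_iff.1 hSk (ε / (2 * C)) (by positivity)] with i hi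
  have hdiff := hA (S i - k) ((hS i).sub hk) (ε / (2 * C)) (by positivity) fun w hw => by
    rw [Pi.sub_apply, ← dist_eq_norm, dist_comm]
    exact (hi w hw).le
  rw [dist_eq_norm, ← Pi.sub_apply, ← map_sub]
  calc ‖A (S i - k) z‖ ≤ C * (ε / (2 * C)) := hdiff
    _ < ε := by field_simp; linarith

theorem hasSum_apply_of_norm_le {ι : Type*} (hA : A.SupBoundedAt U L C z) (hC : 0 < C)
    {g : ι → E → ℂ} {k : E → ℂ} {u : ι → ℝ}
    (hg : ∀ i, DifferentiableOn ℂ (g i) U) (hk : DifferentiableOn ℂ k U) (hu : Summable u)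
    (hgu : ∀ i, ∀ w ∈ L, ‖g i w‖ ≤ u i) (hgk : ∀ w ∈ L, HasSum (g · w) (k w)) :
    HasSum (fun i => A (g i) z) (A k z) := by
  have hunif : TendstoUniformlyOn (fun s w => ∑ i ∈ s, g i w) k atTop L :=
    (tendstoUniformlyOn_tsum hu hgu).congr_right fun w hw => (hgk w hw).tsum_eq
  have := A.tendsto_apply_of_tendstoUniformlyOn hA hC
    (fun s => DifferentiableOn.fun_sum fun i _ => hg i) hk hunif
  simp only [← Finset.sum_fn, map_sum, Finset.sum_apply] at this
  exact this

end LinearMap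

section CauchyKernel

variable {ι : Type*} [Fintype ι]

theorem summable_prod_pow_mul_prod_inv_pow {r d : ℝ} (hr : 0 ≤ r) (hrd : r < d) :
    Summable fun α : ι → ℕ => (∏ j, r ^ α j) * ∏ j, (d ^ (α j + 1))⁻¹ :=
  (hasSum_prod_pow_mul_prod_inv_pow (x := fun _ => r) (y := fun _ => d) fun _ => by
    rwa [Real.norm_of_nonneg hr, Real.norm_of_nonneg (hr.trans hrd.le)]).summable

theorem differentiableOn_prod_inv_pow {U : Set (ι → ℂ)} {ζ : ι → ℂ} {d : ℝ} (hd : 0 < d)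
    (hU : ∀ w ∈ U, ∀ j, d ≤ ‖w j - ζ j‖) (e : ι → ℕ) :
    DifferentiableOn ℂ (fun w => ∏ j, ((w j - ζ j) ^ e j)⁻¹) U := fun w hw => by
  have hne : ∀ j, (w j - ζ j) ^ e j ≠ 0 := fun j =>
    pow_ne_zero _ (norm_pos_iff.1 (hd.trans_le (hU w hw j)))
  exact DifferentiableAt.differentiableWithinAt (by fun_prop (disch := exact hne _))

variable {E' : Type*} {A : ((ι → ℂ) → ℂ) →ₗ[ℂ] (E' → ℂ)} {U L : Set (ι → ℂ)} {z : E'}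
  {C d : ℝ} {ζ₀ : ι → ℂ}

theorem LinearMap.hasSum_apply_prod_inv_sub (hA : A.SupBoundedAt U L C z)
    (hC : 0 < C) (hLU : L ⊆ U) (hU : ∀ w ∈ U, ∀ j, d ≤ ‖w j - ζ₀ j‖) {ζ : ι → ℂ} {r : ℝ}
    (hr : 0 ≤ r) (hrd : r < d) (hζ : ζ ∈ closedBall ζ₀ r) :
    HasSum (fun α : ι → ℕ =>
        (∏ j, (ζ j - ζ₀ j) ^ α j) * A (fun w => ∏ j, ((w j - ζ₀ j) ^ (α j + 1))⁻¹) z)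
      (A (fun w => ∏ j, (w j - ζ j)⁻¹) z) := by
  have hd : 0 < d := hr.trans_lt hrd
  replace hζ : ∀ j, ‖ζ j - ζ₀ j‖ ≤ r := fun j =>
    (norm_le_pi_norm (ζ - ζ₀) j).trans (mem_closedBall_iff_norm.1 hζ)
  have hk : DifferentiableOn ℂ (fun w => ∏ j, (w j - ζ j)⁻¹) U := by
    have hUζ : ∀ w ∈ U, ∀ j, d - r ≤ ‖w j - ζ j‖ := fun w hw j => by
      linarith [norm_sub_le_norm_sub_add_norm_sub (w j) (ζ j) (ζ₀ j), hU w hw j, hζ j]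
    simpa using differentiableOn_prod_inv_pow (sub_pos.2 hrd) hUζ 1
  have hg : ∀ α : ι → ℕ, DifferentiableOn ℂ
      ((∏ j, (ζ j - ζ₀ j) ^ α j) • fun w => ∏ j, ((w j - ζ₀ j) ^ (α j + 1))⁻¹) U :=
    fun α => (differentiableOn_prod_inv_pow hd hU (α + 1)).const_smul _
  have hgb : ∀ α : ι → ℕ, ∀ w ∈ L,
      ‖(∏ j, (ζ j - ζ₀ j) ^ α j) * ∏ j, ((w j - ζ₀ j) ^ (α j + 1))⁻¹‖ ≤
        (∏ j, r ^ α j) * ∏ j, (d ^ (α j + 1))⁻¹ := fun α w hw => by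
    rw [norm_mul]
    exact mul_le_mul (norm_prod_pow_le hζ α) (norm_prod_inv_pow_le hd (hU w (hLU hw)) _)
      (norm_nonneg _) (by positivity)
  have hgk : ∀ w ∈ L, HasSum (fun α : ι → ℕ =>
      (∏ j, (ζ j - ζ₀ j) ^ α j) * ∏ j, ((w j - ζ₀ j) ^ (α j + 1))⁻¹) (∏ j, (w j - ζ j)⁻¹) :=
    fun w hw => by
      simpa only [Pi.sub_apply, sub_sub_sub_cancel_right] using
        hasSum_prod_pow_mul_prod_inv_pow (x := ζ - ζ₀) (y := w - ζ₀)
          fun j => (hζ j).trans_lt (hrd.trans_le (hU w (hLU hw) j))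
  have := A.hasSum_apply_of_norm_le hA hC hg hk
    (summable_prod_pow_mul_prod_inv_pow hr hrd) hgb hgk
  simpa only [map_smul, Pi.smul_apply, smul_eq_mul] using this

theorem LinearMap.differentiableOn_tsum_prod_pow_mul_apply [NormedAddCommGroup E']
    [NormedSpace ℂ E'] {V : Set E'} (hV : IsOpen V)
    (hAV : ∀ f, DifferentiableOn ℂ f U → DifferentiableOn ℂ (A f) V)
    (hA : ∀ z ∈ V, A.SupBoundedAt U L C z) (hLU : L ⊆ U)
    (hU : ∀ w ∈ U, ∀ j, d ≤ ‖w j - ζ₀ j‖) {r : ℝ} (hr : 0 ≤ r) (hrd : r < d) :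
    DifferentiableOn ℂ (fun q : (ι → ℂ) × E' => ∑' α : ι → ℕ,
        (∏ j, (q.1 j - ζ₀ j) ^ α j) * A (fun w => ∏ j, ((w j - ζ₀ j) ^ (α j + 1))⁻¹) q.2)
      (ball ζ₀ r ×ˢ V) := by
  have hd : 0 < d := hr.trans_lt hrd
  have hc : ∀ α : ι → ℕ, DifferentiableOn ℂ (fun w => ∏ j, ((w j - ζ₀ j) ^ (α j + 1))⁻¹) U :=
    fun α => differentiableOn_prod_inv_pow hd hU (α + 1)
  refine differentiableOn_tsum_of_summable_norm
    ((summable_prod_pow_mul_prod_inv_pow hr hrd).mul_left C) (fun α => ?_)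
    (isOpen_ball.prod hV) fun α q hq => ?_
  · have hP : Differentiable ℂ fun q : (ι → ℂ) × E' => ∏ j, (q.1 j - ζ₀ j) ^ α j := by fun_prop
    exact hP.differentiableOn.mul ((hAV _ (hc α)).comp differentiableOn_snd fun q hq => hq.2)
  · have hq1 : ∀ j, ‖q.1 j - ζ₀ j‖ ≤ r := fun j =>
      (norm_le_pi_norm (q.1 - ζ₀) j).trans (mem_ball_iff_norm.1 hq.1).le
    rw [norm_mul, mul_left_comm]
    exact mul_le_mul (norm_prod_pow_le hq1 α)
      (hA _ hq.2 _ (hc α) _ (by positivity) fun w hw => norm_prod_inv_pow_le hd (hU w (hLU hw)) _)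
      (norm_nonneg _) (by positivity)

end CauchyKernel

theorem exists_pos_forall_le_norm_sub_of_notMem_closure {ι : Type*} [Fintype ι]
    {G : ι → Set ℂ} {ζ₀ : ι → ℂ} (hζ₀ : ∀ j, ζ₀ j ∉ closure (G j)) :
    ∃ d > 0, ∀ w ∈ univ.pi G, ∀ j, d ≤ ‖w j - ζ₀ j‖ := by
  classical
  have hopen : IsOpen (univ.pi fun j => (closure (G j))ᶜ) :=
    isOpen_set_pi finite_univ fun j _ => isClosed_closure.isOpen_compl
  obtain ⟨d, hd, hball⟩ := Metric.isOpen_iff.1 hopen ζ₀ fun j _ => hζ₀ j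
  refine ⟨d, hd, fun w hw j => ?_⟩
  by_contra! hwj
  have hmem : Function.update ζ₀ j (w j) ∈ ball ζ₀ d := by
    refine mem_ball.2 ((dist_pi_lt_iff hd).2 fun i => ?_)
    rcases eq_or_ne i j with rfl | hij
    · simpa [dist_eq_norm] using hwj
    · simpa [hij] using hd
  exact hball hmem j (mem_univ j) (by simpa using subset_closure (hw j (mem_univ j)))

theorem stmt_5_general (n : ℕ) (G1 : Fin n → Set ℂ)
    (G2 : Set (Fin n → ℂ)) (hG2 : IsOpen G2)
    (A : ((Fin n → ℂ) → ℂ) →ₗ[ℂ] ((Fin n → ℂ) → ℂ))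
    (hA1 : ∀ f : (Fin n → ℂ) → ℂ,
      DifferentiableOn ℂ f (Set.univ.pi G1) → DifferentiableOn ℂ (A f) G2)
    (hA2 : ∀ K : Set (Fin n → ℂ), IsCompact K → K ⊆ G2 →
      ∃ (L : Set (Fin n → ℂ)) (C : ℝ), IsCompact L ∧ L ⊆ Set.univ.pi G1 ∧ 0 < C ∧
        ∀ f : (Fin n → ℂ) → ℂ, DifferentiableOn ℂ f (Set.univ.pi G1) →
          (⨆ z ∈ K, ‖A f z‖) ≤ C * ⨆ z ∈ L, ‖f z‖) :
    DifferentiableOn ℂ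
      (fun p : (Fin n → ℂ) × (Fin n → ℂ) => A (fun w => ∏ j, (w j - p.1 j)⁻¹) p.2)
      ({ζ : Fin n → ℂ | ∀ j, ζ j ∉ closure (G1 j)} ×ˢ G2) := by
  rintro ⟨ζ₀, z₀⟩ ⟨hζ₀, hz₀⟩
  obtain ⟨d, hd, hdist⟩ := exists_pos_forall_le_norm_sub_of_notMem_closure hζ₀
  obtain ⟨ρ, hρ, hKG2⟩ := Metric.nhds_basis_closedBall.mem_iff.1 (hG2.mem_nhds hz₀)
  obtain ⟨L, C, -, hLG1, hC, hAL⟩ := hA2 _ (isCompact_closedBall z₀ ρ) hKG2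
  have hA : ∀ z ∈ closedBall z₀ ρ, A.SupBoundedAt (univ.pi G1) L C z :=
    fun z hz f hf M hM hfM =>
    (isCompact_closedBall z₀ ρ).norm_le_mul_of_iSup_norm_le
      ((hA1 f hf).continuousOn.mono hKG2) (hAL f hf) hC.le hM hfM hz
  have hNhds : ball ζ₀ (d / 2) ×ˢ ball z₀ ρ ∈ 𝓝 (ζ₀, z₀) :=
    prod_mem_nhds (ball_mem_nhds _ (half_pos hd)) (ball_mem_nhds _ hρ)
  have hsum : ∀ q ∈ ball ζ₀ (d / 2) ×ˢ ball z₀ ρ, HasSum (fun α : Fin n → ℕ =>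
      (∏ j, (q.1 j - ζ₀ j) ^ α j) * A (fun w => ∏ j, ((w j - ζ₀ j) ^ (α j + 1))⁻¹) q.2)
      (A (fun w => ∏ j, (w j - q.1 j)⁻¹) q.2) := fun q hq =>
    A.hasSum_apply_prod_inv_sub (hA _ (ball_subset_closedBall hq.2)) hC hLG1 hdist
      (half_pos hd).le (half_lt_self hd) (ball_subset_closedBall hq.1)
  have hdiff := A.differentiableOn_tsum_prod_pow_mul_apply isOpen_ball
    (fun f hf => (hA1 f hf).mono (ball_subset_closedBall.trans hKG2))
    (fun z hz => hA z (ball_subset_closedBall hz)) hLG1 hdist (half_pos hd).le (half_lt_self hd)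
  exact ((hdiff.differentiableAt hNhds).congr_of_eventuallyEq
    (eventually_of_mem hNhds fun q hq => (hsum q hq).tsum_eq.symm)).differentiableWithinAt

/-- For a bounded linear operator `A` between spaces of holomorphic
functions on a cylindrical domain `G₁ = G₁⁽¹⁾ × ⋯ × G₁⁽ⁿ⁾` and an open set `G₂`,
the kernel `(ζ, z) ↦ A(w ↦ ∏ⱼ (wⱼ - ζⱼ)⁻¹)(z)` is jointly holomorphic on
`{ζ | ∀ j, ζⱼ ∉ closure G₁⁽ʲ⁾} × G₂`. -/
theorem stmt_5 (n : ℕ) (G1 : Fin n → Set ℂ)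
    (hne : ∀ j, (G1 j).Nonempty) (hop : ∀ j, IsOpen (G1 j))
    (G2 : Set (Fin n → ℂ)) (hG2 : IsOpen G2)
    (A : ((Fin n → ℂ) → ℂ) →ₗ[ℂ] ((Fin n → ℂ) → ℂ))
    (hA1 : ∀ f : (Fin n → ℂ) → ℂ,
      DifferentiableOn ℂ f (Set.univ.pi G1) → DifferentiableOn ℂ (A f) G2)
    (hA2 : ∀ K : Set (Fin n → ℂ), IsCompact K → K ⊆ G2 →
      ∃ (L : Set (Fin n → ℂ)) (C : ℝ), IsCompact L ∧ L ⊆ Set.univ.pi G1 ∧ 0 < C ∧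
        ∀ f : (Fin n → ℂ) → ℂ, DifferentiableOn ℂ f (Set.univ.pi G1) →
          (⨆ z ∈ K, ‖A f z‖) ≤ C * ⨆ z ∈ L, ‖f z‖) :
    DifferentiableOn ℂ
      (fun p : (Fin n → ℂ) × (Fin n → ℂ) => A (fun w => ∏ j, (w j - p.1 j)⁻¹) p.2)
      ({ζ : Fin n → ℂ | ∀ j, ζ j ∉ closure (G1 j)} ×ˢ G2) :=
  stmt_5_general n G1 G2 hG2 A hA1 hA2
end

section
/- Let ρ ∈ (ℝ_{>0})ⁿ, let G₁ := P(ρ) be the open polydisc of polyradius ρ, and let G₂ ⊆ ℂⁿ be open and nonempty. Let A : ((Fin n → ℂ) → ℂ) →ₗ[ℂ] ((Fin n → ℂ) → ℂ) be a ℂ-linear map such that: (i) for every f holomorphic on G₁, A f is holomorphic on G₂; and (ii) for every compact set K ⊆ G₂ there exist a compact set L ⊆ G₁ and C > 0 such that ‖A f‖_K ≤ C ‖f‖_L for every f holomorphic on G₁. If A(w ↦ ∏_{j=1}^n (w_j − ζ_j)⁻¹)(z) = 0 for every z ∈ G₂ and every ζ ∈ ℂⁿ with |ζ_j| ≥ ρ_j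 for all j, then A f = 0 on G₂ for every f holomorphic on G₁. -/
/-!
On a compact set `K` inside the polydisc `P(ρ)`, every `f` holomorphic on `P(ρ)` is a uniform
limit of linear combinations of the kernels `w ↦ ∏ⱼ (wⱼ - ζⱼ)⁻¹` with `|ζⱼ| = ρⱼ`. Indeed the
dilates `f (t • ·)`, `t < 1`, are holomorphic on the closed polydisc and tend to `f` uniformly on
`K`; for such a function, applying the one-variable Cauchy formula on the circle `|ζⱼ| = ρⱼ` in
one variable after the other writes it as an iterated integral of kernels, and Riemann sums of
these integrals converge uniformly on `K`. Since `A` kills the kernels at `z`, the estimate (ii)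
for `K = {z}` gives `‖A f z‖ ≤ C ε` for every `ε > 0`.
-/

open Set Filter Topology Metric Function

section UniformClosure

variable {α 𝕜 E : Type*} [NormedField 𝕜] [SeminormedAddCommGroup E] [NormedSpace 𝕜 E]

def uniformClosureOn (V : Submodule 𝕜 (α → E)) (K : Set α) : Submodule 𝕜 (α → E) where
  carrier := {f | ∀ ε > 0, ∃ g ∈ V, ∀ x ∈ K, ‖f x - g x‖ ≤ ε}
  add_mem' {f₁ f₂} h₁ h₂ ε hε := by
    obtain ⟨g₁, hg₁, hfg₁⟩ := h₁ (ε / 2) (half_pos hε)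
    obtain ⟨g₂, hg₂, hfg₂⟩ := h₂ (ε / 2) (half_pos hε)
    refine ⟨g₁ + g₂, V.add_mem hg₁ hg₂, fun x hx => ?_⟩
    calc ‖(f₁ + f₂) x - (g₁ + g₂) x‖ = ‖(f₁ x - g₁ x) + (f₂ x - g₂ x)‖ := by
          simp only [Pi.add_apply, add_sub_add_comm]
      _ ≤ ε / 2 + ε / 2 := (norm_add_le _ _).trans (add_le_add (hfg₁ x hx) (hfg₂ x hx))
      _ = ε := add_halves ε
  zero_mem' ε hε := ⟨0, V.zero_mem, fun x _ => by simpa using hε.le⟩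
  smul_mem' c f hf ε hε := by
    obtain ⟨g, hg, hfg⟩ := hf (ε / (‖c‖ + 1)) (by positivity)
    refine ⟨c • g, V.smul_mem c hg, fun x hx => ?_⟩
    calc ‖(c • f) x - (c • g) x‖ = ‖c‖ * ‖f x - g x‖ := by
          rw [Pi.smul_apply, Pi.smul_apply, ← smul_sub, norm_smul]
      _ ≤ (‖c‖ + 1) * (ε / (‖c‖ + 1)) := by
          gcongr
          exacts [le_add_of_nonneg_right zero_le_one, hfg x hx]
      _ = ε := mul_div_cancel₀ _ (by positivity)

variable {V : Submodule 𝕜 (α → E)} {K : Set α}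

theorem le_uniformClosureOn : V ≤ uniformClosureOn V K :=
  fun f hf _ hε => ⟨f, hf, fun x _ => by simpa using hε.le⟩

theorem mem_uniformClosureOn_of_eqOn {f f' : α → E} (hf : f ∈ uniformClosureOn V K)
    (hff' : EqOn f f' K) : f' ∈ uniformClosureOn V K :=
  fun ε hε => let ⟨g, hg, hfg⟩ := hf ε hε; ⟨g, hg, fun x hx => hff' hx ▸ hfg x hx⟩

theorem TendstoUniformlyOn.mem_uniformClosureOn {ι : Type*} {l : Filter ι} [l.NeBot]
    {F : ι → α → E} {f : α → E} (h : TendstoUniformlyOn F f l K)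
    (hF : ∀ᶠ i in l, F i ∈ uniformClosureOn V K) : f ∈ uniformClosureOn V K := by
  intro ε hε
  obtain ⟨i, hfF, hFi⟩ := ((Metric.tendstoUniformlyOn_iff.1 h _ (half_pos hε)).and hF).exists
  obtain ⟨g, hg, hFg⟩ := hFi _ (half_pos hε)
  refine ⟨g, hg, fun x hx => ?_⟩
  calc ‖f x - g x‖ ≤ ‖f x - F i x‖ + ‖F i x - g x‖ := norm_sub_le_norm_sub_add_norm_sub _ _ _
    _ ≤ ε / 2 + ε / 2 := add_le_add (dist_eq_norm (f x) _ ▸ (hfF x hx).le) (hFg x hx)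
    _ = ε := add_halves ε

end UniformClosure

section RiemannSum

variable {α E : Type*} [PseudoMetricSpace α] [NormedAddCommGroup E] [NormedSpace ℝ E]
  [CompleteSpace E]

theorem norm_intervalIntegral_sub_smul_le {φ : ℝ → E} {x y η : ℝ} (hxy : x ≤ y)
    (hφ : IntervalIntegrable φ MeasureTheory.volume x y)
    (h : ∀ θ ∈ Icc x y, ‖φ θ - φ x‖ ≤ η) :
    ‖(∫ θ in x..y, φ θ) - (y - x) • φ x‖ ≤ η * (y - x) := by
  rw [← intervalIntegral.integral_const,
    ← intervalIntegral.integral_sub hφ intervalIntegrable_const, ← abs_of_nonneg (sub_nonneg.2 hxy)]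
  refine intervalIntegral.norm_integral_le_of_norm_le_const fun θ hθ => h θ ?_
  rw [uIoc_of_le hxy] at hθ
  exact Ioc_subset_Icc_self hθ

theorem add_mul_sub_div_mem_Icc {a b : ℝ} (hab : a ≤ b) {k N : ℕ} (hk : k ≤ N) :
    a + k * ((b - a) / N) ∈ Icc a b := by
  rcases N.eq_zero_or_pos with rfl | hN
  · simp [Nat.le_zero.1 hk, hab]
  have hkN : (k : ℝ) ≤ N := by exact_mod_cast hk
  have hN' : (0 : ℝ) < N := by exact_mod_cast hN
  constructor
  · have : 0 ≤ k * ((b - a) / N) := by have := sub_nonneg.2 hab; positivity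
    linarith
  · rw [mul_div_assoc', add_comm, ← le_sub_iff_add_le, div_le_iff₀ hN']
    nlinarith

theorem tendstoUniformlyOn_riemannSum {Φ : ℝ → α → E} {K : Set α} {a b : ℝ} (hK : IsCompact K)
    (hab : a ≤ b) (hΦ : ContinuousOn (uncurry Φ) (Icc a b ×ˢ K)) :
    TendstoUniformlyOn
      (fun N : ℕ => ∑ k ∈ Finset.range N, ((b - a) / N) • Φ (a + k * ((b - a) / N)))
      (fun x => ∫ θ in a..b, Φ θ x) atTop K := by
  rw [Metric.tendstoUniformlyOn_iff]
  intro ε hε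
  set η := ε / (b - a + 1)
  have hη : 0 < η := by have := sub_nonneg.2 hab; positivity
  obtain ⟨δ, hδ, hΦδ⟩ := Metric.uniformContinuousOn_iff.1
    ((isCompact_Icc.prod hK).uniformContinuousOn_of_continuous hΦ) _ hη
  have hmesh := (tendsto_const_div_atTop_nhds_zero_nat (b - a)).eventually (gt_mem_nhds hδ)
  filter_upwards [hmesh, eventually_gt_atTop 0] with N hNδ hN x hx
  set h := (b - a) / N
  have hNh : N * h = b - a := mul_div_cancel₀ _ (by positivity)
  set t : ℕ → ℝ := fun k => a + k * h
  have ht_succ : ∀ k, t (k + 1) = t k + h := fun k => by simp only [t]; push_cast; ring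
  have hh : 0 ≤ h := by have := sub_nonneg.2 hab; positivity
  have hslice : ∀ k < N, Icc (t k) (t (k + 1)) ⊆ Icc a b := fun k hk =>
    Icc_subset_Icc (add_mul_sub_div_mem_Icc hab hk.le).1 (add_mul_sub_div_mem_Icc hab hk).2
  have hint : ∀ k < N, IntervalIntegrable (Φ · x) MeasureTheory.volume (t k) (t (k + 1)) :=
    fun k hk => ContinuousOn.intervalIntegrable_of_Icc (by rw [ht_succ]; linarith) <|
      hΦ.comp (continuous_id.prodMk continuous_const).continuousOn
        fun θ hθ => ⟨hslice k hk hθ, hx⟩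
  have hpiece : ∀ k < N, ‖(∫ θ in t k..t (k + 1), Φ θ x) - h • Φ (t k) x‖ ≤ η * h := by
    intro k hk
    have hle : t k ≤ t (k + 1) := by rw [ht_succ]; linarith
    have hnode : (t k, x) ∈ Icc a b ×ˢ K := ⟨hslice k hk ⟨le_rfl, hle⟩, hx⟩
    have := norm_intervalIntegral_sub_smul_le hle (hint k hk) (η := η) fun θ hθ => by
      rw [← dist_eq_norm]
      refine (hΦδ (θ, x) ⟨hslice k hk hθ, hx⟩ _ hnode ?_).le
      rw [Prod.dist_eq, dist_self, Real.dist_eq, abs_of_nonneg (sub_nonneg.2 hθ.1)]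
      exact max_lt (by linarith [hθ.2, ht_succ k]) hδ
    simpa only [ht_succ, add_sub_cancel_left] using this
  have hsplit : ∫ θ in a..b, Φ θ x = ∑ k ∈ Finset.range N, ∫ θ in t k..t (k + 1), Φ θ x := by
    rw [intervalIntegral.sum_integral_adjacent_intervals hint]
    simp only [t, h, CharP.cast_eq_zero, zero_mul, add_zero, hNh, add_sub_cancel]
  rw [dist_eq_norm, hsplit, Finset.sum_apply, ← Finset.sum_sub_distrib]
  calc ‖∑ k ∈ Finset.range N, ((∫ θ in t k..t (k + 1), Φ θ x) - (h • Φ (t k)) x)‖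
      ≤ ∑ _k ∈ Finset.range N, η * h :=
        norm_sum_le_of_le _ fun k hk => hpiece k (Finset.mem_range.1 hk)
    _ = η * (b - a) := by
        rw [Finset.sum_const, Finset.card_range, nsmul_eq_mul, mul_left_comm, hNh]
    _ < ε := by
        rw [div_mul_eq_mul_div, div_lt_iff₀ (by linarith)]
        nlinarith

theorem intervalIntegral_mem_uniformClosureOn [NormedSpace ℂ E] {V : Submodule ℂ (α → E)}
    {Φ : ℝ → α → E} {K : Set α} {a b : ℝ} (hK : IsCompact K) (hab : a ≤ b)
    (hΦ : ContinuousOn (uncurry Φ) (Icc a b ×ˢ K))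
    (hΦV : ∀ θ ∈ Icc a b, Φ θ ∈ uniformClosureOn V K) :
    (fun x => ∫ θ in a..b, Φ θ x) ∈ uniformClosureOn V K :=
  (tendstoUniformlyOn_riemannSum hK hab hΦ).mem_uniformClosureOn <| .of_forall fun _ =>
    Submodule.sum_mem _ fun _ hk => Submodule.smul_of_tower_mem _ _ <|
      hΦV _ (add_mul_sub_div_mem_Icc hab (Finset.mem_range.1 hk).le)

end RiemannSum

theorem biSup_singleton_of_nonneg {α : Type*} {u : α → ℝ} {z : α} (hu : 0 ≤ u z) :
    ⨆ w ∈ ({z} : Set α), u w = u z := by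
  have hle : ∀ w, ⨆ _ : w ∈ ({z} : Set α), u w ≤ u z :=
    fun w => Real.iSup_le (fun hw => (mem_singleton_iff.1 hw) ▸ le_rfl) hu
  exact le_antisymm (Real.iSup_le hle hu)
    (le_ciSup_of_le ⟨u z, forall_mem_range.2 hle⟩ z (ciSup_pos (f := fun _ => u z) rfl).ge)

open Real

theorem DiffContOnCl.eq_intervalIntegral_circleMap {E : Type*} [NormedAddCommGroup E]
    [NormedSpace ℂ E] [CompleteSpace E] {f : ℂ → E} {c w : ℂ} {R : ℝ}
    (hf : DiffContOnCl ℂ f (ball c R)) (hw : w ∈ ball c R) :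
    f w = ∫ θ in 0..2 * π,
      (-(2 * π : ℂ)⁻¹ * circleMap 0 R θ * (w - circleMap c R θ)⁻¹) • f (circleMap c R θ) := by
  rw [← hf.two_pi_i_inv_smul_circleIntegral_sub_inv_smul hw, circleIntegral,
    ← intervalIntegral.integral_smul]
  refine intervalIntegral.integral_congr fun θ _ => ?_
  simp only [deriv_circleMap, smul_smul]
  rw [← neg_sub, inv_neg]
  field_simp

section Polydisc

variable {n : ℕ}

noncomputable def cauchyKernel (ζ w : Fin n → ℂ) : ℂ := ∏ j, (w j - ζ j)⁻¹

def torusKernelSpan (ρ : Fin n → ℝ) : Submodule ℂ ((Fin n → ℂ) → ℂ) :=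
  Submodule.span ℂ (cauchyKernel '' {ζ | ∀ j, ‖ζ j‖ = ρ j})

variable {ρ : Fin n → ℝ}

theorem differentiableOn_of_mem_torusKernelSpan {g : (Fin n → ℂ) → ℂ}
    (hg : g ∈ torusKernelSpan ρ) : DifferentiableOn ℂ g {w | ∀ j, ‖w j‖ < ρ j} := by
  induction hg using Submodule.span_induction with
  | mem g hg =>
    obtain ⟨ζ, hζ, rfl⟩ := hg
    intro w (hw : ∀ j, ‖w j‖ < ρ j)
    have hd : ∀ j, DifferentiableAt ℂ (fun x : Fin n → ℂ => (x j - ζ j)⁻¹) w := fun j =>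
      ((differentiable_apply j).sub_const (ζ j) w).inv fun h => (hw j).ne <| by
        rw [sub_eq_zero.1 h, hζ j]
    exact (HasFDerivAt.finsetProd fun j _ => (hd j).hasFDerivAt).differentiableAt
      |>.differentiableWithinAt
  | zero => exact differentiableOn_const 0
  | add _ _ _ _ h₁ h₂ => exact h₁.add h₂
  | smul c _ _ h => exact h.const_smul c

/-- Interpolates between `F ζ • cauchyKernel ζ` at `T = ∅` and `F` at `T = univ`: integrating
`ζ j`, `j ∉ T`, over the circle of radius `ρ j` passes from `T` to `insert j T`. -/
noncomputable def partialCauchyTerm (F : (Fin n → ℂ) → ℂ) (T : Finset (Fin n))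
    (ζ w : Fin n → ℂ) : ℂ :=
  (∏ j ∈ Tᶜ, (w j - ζ j)⁻¹) * F (T.piecewise w ζ)

variable {F : (Fin n → ℂ) → ℂ}

theorem partialCauchyTerm_univ (ζ : Fin n → ℂ) : partialCauchyTerm F Finset.univ ζ = F := by
  ext w; simp [partialCauchyTerm]

theorem partialCauchyTerm_empty (ζ : Fin n → ℂ) :
    partialCauchyTerm F ∅ ζ = F ζ • cauchyKernel ζ := by
  ext w; simp [partialCauchyTerm, cauchyKernel, mul_comm]

theorem partialCauchyTerm_update {T : Finset (Fin n)} {j : Fin n} (hj : j ∉ T)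
    (ζ w : Fin n → ℂ) (u : ℂ) :
    partialCauchyTerm F T (update ζ j u) w =
      (w j - u)⁻¹ * ((∏ i ∈ (insert j T)ᶜ, (w i - ζ i)⁻¹) * F (update (T.piecewise w ζ) j u)) := by
  rw [partialCauchyTerm, ← T.update_piecewise_of_notMem w ζ hj, ← mul_assoc, Finset.compl_insert,
    ← Finset.mul_prod_erase _ _ (Finset.mem_compl.2 hj), update_self]
  congr 2
  exact Finset.prod_congr rfl fun i hi => by rw [update_of_ne (Finset.ne_of_mem_erase hi)]

theorem partialCauchyTerm_insert_eq_integral {T : Finset (Fin n)} {j : Fin n} (hj : j ∉ T)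
    (hF : DifferentiableOn ℂ F {z | ∀ i, ‖z i‖ ≤ ρ i}) {ζ w : Fin n → ℂ}
    (hζ : ∀ i, ‖ζ i‖ = ρ i) (hw : ∀ i, ‖w i‖ < ρ i) :
    partialCauchyTerm F (insert j T) ζ w = ∫ θ in 0..2 * π,
      ((-(2 * π : ℂ)⁻¹ * circleMap 0 (ρ j) θ) •
        partialCauchyTerm F T (update ζ j (circleMap 0 (ρ j) θ))) w := by
  set p := T.piecewise w ζ
  have hp : ∀ i, ‖p i‖ ≤ ρ i := fun i => T.piecewise_cases w ζ (‖·‖ ≤ ρ i) (hw i).le (hζ i).le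
  have hG : DiffContOnCl ℂ (fun u => F (update p j u)) (ball 0 (ρ j)) := by
    refine (hF.comp (fun u _ => (hasFDerivAt_update p u).differentiableAt.differentiableWithinAt)
      fun u hu i => ?_).diffContOnCl_ball subset_rfl
    rcases eq_or_ne i j with rfl | hij
    · simpa using hu
    · simpa [update_of_ne hij] using hp i
  rw [partialCauchyTerm, Finset.piecewise_insert,
    hG.eq_intervalIntegral_circleMap (mem_ball_zero_iff.2 (hw j)),
    ← intervalIntegral.integral_const_mul]
  refine intervalIntegral.integral_congr fun θ _ => ?_
  simp only [Pi.smul_apply, smul_eq_mul, partialCauchyTerm_update hj]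
  ring

theorem continuousOn_partialCauchyTerm (hF : ContinuousOn F {z | ∀ i, ‖z i‖ ≤ ρ i})
    (T : Finset (Fin n)) :
    ContinuousOn (fun q : (Fin n → ℂ) × (Fin n → ℂ) => partialCauchyTerm F T q.1 q.2)
      ({ζ | ∀ i, ‖ζ i‖ = ρ i} ×ˢ {w | ∀ i, ‖w i‖ < ρ i}) := by
  have hpw : Continuous fun q : (Fin n → ℂ) × (Fin n → ℂ) => T.piecewise q.2 q.1 :=
    continuous_pi fun i => by
      by_cases hi : i ∈ T <;>
        simp only [hi, Finset.piecewise_eq_of_mem, Finset.piecewise_eq_of_notMem,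
          not_false_eq_true] <;> fun_prop
  refine ContinuousOn.mul (continuousOn_finsetProd _ fun i _ => ?_) <| hF.comp hpw.continuousOn
    fun q hq i => T.piecewise_cases q.2 q.1 (‖·‖ ≤ ρ i) (hq.2 i).le (hq.1 i).le
  refine (Continuous.continuousOn (by fun_prop)).inv₀ fun q hq hq0 => (hq.2 i).ne ?_
  rw [sub_eq_zero.1 hq0, hq.1 i]

theorem partialCauchyTerm_mem_uniformClosureOn
    (hF : DifferentiableOn ℂ F {z | ∀ i, ‖z i‖ ≤ ρ i}) {K : Set (Fin n → ℂ)} (hK : IsCompact K)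
    (hKρ : K ⊆ {w | ∀ i, ‖w i‖ < ρ i}) (T : Finset (Fin n)) {ζ : Fin n → ℂ}
    (hζ : ∀ i, ‖ζ i‖ = ρ i) :
    partialCauchyTerm F T ζ ∈ uniformClosureOn (torusKernelSpan ρ) K := by
  induction T using Finset.induction_on generalizing ζ with
  | empty =>
    rw [partialCauchyTerm_empty]
    exact le_uniformClosureOn (Submodule.smul_mem _ _ (Submodule.subset_span ⟨ζ, hζ, rfl⟩))
  | insert j T hj ih =>
    have hζθ : ∀ θ : ℝ, ∀ i, ‖update ζ j (circleMap 0 (ρ j) θ) i‖ = ρ i := fun θ i => by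
      rcases eq_or_ne i j with rfl | hij
      · rw [update_self, norm_circleMap_zero, abs_of_nonneg (hζ i ▸ norm_nonneg _)]
      · rw [update_of_ne hij, hζ i]
    have hcoeff : Continuous fun q : ℝ × (Fin n → ℂ) => -(2 * π : ℂ)⁻¹ * circleMap 0 (ρ j) q.1 :=
      continuous_const.mul ((continuous_circleMap 0 _).comp continuous_fst)
    have hupd : Continuous fun q : ℝ × (Fin n → ℂ) => (update ζ j (circleMap 0 (ρ j) q.1), q.2) :=
      by fun_prop
    have hmaps : MapsTo (fun q : ℝ × (Fin n → ℂ) => (update ζ j (circleMap 0 (ρ j) q.1), q.2))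
        (Icc 0 (2 * π) ×ˢ K) ({ζ | ∀ i, ‖ζ i‖ = ρ i} ×ˢ {w | ∀ i, ‖w i‖ < ρ i}) :=
      fun q hq => mk_mem_prod (hζθ q.1) (hKρ hq.2)
    have hterm := (continuousOn_partialCauchyTerm hF.continuousOn T).comp hupd.continuousOn hmaps
    refine mem_uniformClosureOn_of_eqOn (intervalIntegral_mem_uniformClosureOn
      (Φ := fun θ => (-(2 * π : ℂ)⁻¹ * circleMap 0 (ρ j) θ) •
        partialCauchyTerm F T (update ζ j (circleMap 0 (ρ j) θ)))
      hK two_pi_pos.le (hcoeff.continuousOn.mul hterm)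
      fun θ _ => Submodule.smul_mem _ _ (ih (hζθ θ))) fun w hw => ?_
    exact (partialCauchyTerm_insert_eq_integral hj hF hζ (hKρ hw)).symm

theorem mem_uniformClosureOn_torusKernelSpan_of_differentiableOn_closed (hρ : ∀ i, 0 ≤ ρ i)
    (hF : DifferentiableOn ℂ F {z | ∀ i, ‖z i‖ ≤ ρ i}) {K : Set (Fin n → ℂ)} (hK : IsCompact K)
    (hKρ : K ⊆ {w | ∀ i, ‖w i‖ < ρ i}) : F ∈ uniformClosureOn (torusKernelSpan ρ) K := by
  simpa only [partialCauchyTerm_univ] using partialCauchyTerm_mem_uniformClosureOn hF hK hKρ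
    Finset.univ (ζ := fun i => (ρ i : ℂ)) fun i => by simp [abs_of_nonneg (hρ i)]

theorem mem_uniformClosureOn_torusKernelSpan_of_differentiableOn (hρ : ∀ i, 0 < ρ i)
    {f : (Fin n → ℂ) → ℂ} (hf : DifferentiableOn ℂ f {z | ∀ i, ‖z i‖ < ρ i})
    {K : Set (Fin n → ℂ)} (hK : IsCompact K) (hKρ : K ⊆ {w | ∀ i, ‖w i‖ < ρ i}) :
    f ∈ uniformClosureOn (torusKernelSpan ρ) K := by
  have hcont : ContinuousOn (uncurry fun (t : ℝ) w => f (t • w)) (Icc 0 1 ×ˢ K) := by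
    refine hf.continuousOn.comp continuous_smul.continuousOn fun q hq i => ?_
    calc ‖(q.1 • q.2) i‖ = |q.1| * ‖q.2 i‖ := by rw [Pi.smul_apply, norm_smul, Real.norm_eq_abs]
      _ ≤ 1 * ‖q.2 i‖ := by gcongr; exact abs_le.2 ⟨by linarith [hq.1.1], hq.1.2⟩
      _ < ρ i := by rw [one_mul]; exact hKρ hq.2 i
  have hlim : TendstoUniformlyOn (fun (t : ℝ) w => f (t • w)) f (𝓝[<] 1) K := by
    intro u hu
    obtain ⟨v, hv, hvu⟩ := hK.mem_uniformity_of_prod hcont (right_mem_Icc.2 zero_le_one)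
      (symm_le_uniformity hu)
    have hIcc : Icc (0 : ℝ) 1 ∈ 𝓝[<] 1 :=
      mem_of_superset (Ioo_mem_nhdsLT zero_lt_one) Ioo_subset_Icc_self
    filter_upwards [nhdsWithin_le_of_mem hIcc hv] with t ht w hw
    simpa using hvu t ht w hw
  refine hlim.mem_uniformClosureOn ?_
  filter_upwards [Ioo_mem_nhdsLT zero_lt_one] with t ht
  refine mem_uniformClosureOn_torusKernelSpan_of_differentiableOn_closed (fun i => (hρ i).le) ?_ hK hKρ
  refine hf.comp (differentiable_id.const_smul t).differentiableOn fun z hz i => ?_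
  calc ‖(t • z) i‖ = t * ‖z i‖ := by
        rw [Pi.smul_apply, norm_smul, Real.norm_eq_abs, abs_of_pos ht.1]
    _ ≤ t * ρ i := by gcongr; exacts [ht.1.le, hz i]
    _ < ρ i := mul_lt_of_lt_one_left (hρ i) ht.2

end Polydisc

theorem stmt_6_general (n : ℕ) (ρ : Fin n → ℝ) (hρ : ∀ j, 0 < ρ j)
    (G2 : Set (Fin n → ℂ))
    (A : ((Fin n → ℂ) → ℂ) →ₗ[ℂ] ((Fin n → ℂ) → ℂ))
    (hA2 : ∀ K : Set (Fin n → ℂ), IsCompact K → K ⊆ G2 →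
      ∃ (L : Set (Fin n → ℂ)) (C : ℝ), IsCompact L ∧
        L ⊆ {z : Fin n → ℂ | ∀ j, ‖z j‖ < ρ j} ∧ 0 < C ∧
        ∀ f : (Fin n → ℂ) → ℂ,
          DifferentiableOn ℂ f {z : Fin n → ℂ | ∀ j, ‖z j‖ < ρ j} →
          (⨆ z ∈ K, ‖A f z‖) ≤ C * ⨆ z ∈ L, ‖f z‖)
    (hker : ∀ ζ : Fin n → ℂ, (∀ j, ρ j ≤ ‖ζ j‖) →
      ∀ z ∈ G2, A (fun w => ∏ j, (w j - ζ j)⁻¹) z = 0) :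
    ∀ f : (Fin n → ℂ) → ℂ,
      DifferentiableOn ℂ f {z : Fin n → ℂ | ∀ j, ‖z j‖ < ρ j} →
      ∀ z ∈ G2, A f z = 0 := by
  intro f hf z hz
  obtain ⟨L, C, hL, hLρ, hC, hbound⟩ := hA2 {z} isCompact_singleton (singleton_subset_iff.2 hz)
  have hAV : torusKernelSpan ρ ≤ LinearMap.ker ((LinearMap.proj z).comp A) :=
    Submodule.span_le.2 <| by rintro _ ⟨ζ, hζ, rfl⟩; exact hker ζ (fun j => (hζ j).ge) z hz
  refine norm_le_zero_iff.1 (le_of_forall_pos_le_add fun ε hε => ?_)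
  obtain ⟨g, hgV, hfg⟩ := mem_uniformClosureOn_torusKernelSpan_of_differentiableOn hρ hf hL hLρ
    (ε / C) (by positivity)
  have hAg : A g z = 0 := hAV hgV
  calc ‖A f z‖ = ⨆ w ∈ ({z} : Set (Fin n → ℂ)), ‖A (f - g) w‖ := by
        rw [biSup_singleton_of_nonneg (u := fun w => ‖A (f - g) w‖) (norm_nonneg _), map_sub,
          Pi.sub_apply, hAg, sub_zero]
    _ ≤ C * ⨆ w ∈ L, ‖(f - g) w‖ :=
        hbound _ (hf.sub (differentiableOn_of_mem_torusKernelSpan hgV))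
    _ ≤ C * (ε / C) := by
        gcongr
        exact Real.iSup_le (fun w => Real.iSup_le (hfg w) (by positivity)) (by positivity)
    _ = 0 + ε := by field_simp; ring

/-- A bounded operator `A` from `H(P(ρ))` to `H(G₂)` whose Cauchy kernel
`A(w ↦ ∏ⱼ (wⱼ - ζⱼ)⁻¹)` vanishes on `G₂` for all `ζ` with `|ζⱼ| ≥ ρⱼ` is zero, i.e.
`A f = 0` on `G₂` for every `f` holomorphic on the polydisc `P(ρ)`. -/
theorem stmt_6 (n : ℕ) (ρ : Fin n → ℝ) (hρ : ∀ j, 0 < ρ j)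
    (G2 : Set (Fin n → ℂ)) (hG2 : IsOpen G2) (hG2ne : G2.Nonempty)
    (A : ((Fin n → ℂ) → ℂ) →ₗ[ℂ] ((Fin n → ℂ) → ℂ))
    (hA1 : ∀ f : (Fin n → ℂ) → ℂ,
      DifferentiableOn ℂ f {z : Fin n → ℂ | ∀ j, ‖z j‖ < ρ j} →
        DifferentiableOn ℂ (A f) G2)
    (hA2 : ∀ K : Set (Fin n → ℂ), IsCompact K → K ⊆ G2 →
      ∃ (L : Set (Fin n → ℂ)) (C : ℝ), IsCompact L ∧
        L ⊆ {z : Fin n → ℂ | ∀ j, ‖z j‖ < ρ j} ∧ 0 < C ∧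
        ∀ f : (Fin n → ℂ) → ℂ,
          DifferentiableOn ℂ f {z : Fin n → ℂ | ∀ j, ‖z j‖ < ρ j} →
          (⨆ z ∈ K, ‖A f z‖) ≤ C * ⨆ z ∈ L, ‖f z‖)
    (hker : ∀ ζ : Fin n → ℂ, (∀ j, ρ j ≤ ‖ζ j‖) →
      ∀ z ∈ G2, A (fun w => ∏ j, (w j - ζ j)⁻¹) z = 0) :
    ∀ f : (Fin n → ℂ) → ℂ,
      DifferentiableOn ℂ f {z : Fin n → ℂ | ∀ j, ‖z j‖ < ρ j} →
      ∀ z ∈ G2, A f z = 0 :=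
  stmt_6_general n ρ hρ G2 A hA2 hker
end

section
/- Let ρ ∈ (ℝ_{>0})ⁿ, let k, m ∈ ℕⁿ be multi-indices with k ≠ 0, and let z ∈ ℂⁿ satisfy |z^k| < ρ^k. Then (z^k/(2πi)ⁿ) · ∯_{|ζ_j|=ρ_j} ζ^m / ((ζ^k − z^k) · ∏_{j=1}^n ζ_j) dζ equals z^m if there exists an integer l ≥ 1 with m = l·k, and equals 0 otherwise. -/
/-!
On the torus `|ζ_j| = ρ_j` we have `|z^k| < |ζ^k|`, so the kernel expands into the geometric
series `ζ^m / ((ζ^k - z^k) ∏ ζ_j) = ∑_p (z^k)^p ζ^(m - (p+1)k - 1)`, with sup norms bounded by a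
convergent geometric series; hence it may be integrated termwise. The torus integral of a Laurent
monomial `ζ^a` is `(2πi)^n` if `a = (-1, …, -1)` and `0` otherwise, so the only surviving term is
the one with `m = (p+1)k`, contributing `(z^k)^p (2πi)^n`.
-/

open Complex MeasureTheory Metric

theorem circleIntegral_zpow {R : ℝ} (hR : R ≠ 0) (a : ℤ) :
    (∮ z in C(0, R), z ^ a) = if a = -1 then 2 * Real.pi * I else 0 := by
  split_ifs with ha
  · simpa [ha] using circleIntegral.integral_sub_center_inv 0 hR
  · simpa using circleIntegral.integral_sub_zpow_of_ne ha 0 0 R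

theorem continuousOn_zpow_sphere_zero {R : ℝ} (hR : R ≠ 0) (a : ℤ) :
    ContinuousOn (· ^ a) (sphere (0 : ℂ) |R|) :=
  continuousOn_id.zpow₀ _ fun _ hz => Or.inl <| ne_of_mem_sphere hz (abs_ne_zero.2 hR)

theorem norm_torusMap_zero_apply {n : ℕ} (R θ : Fin n → ℝ) (j : Fin n) :
    ‖torusMap 0 R θ j‖ = |R j| := by
  simp [torusMap, norm_exp_ofReal_mul_I]

theorem torusIntegrable_prod {n : ℕ} {f : Fin n → ℂ → ℂ} {c : Fin n → ℂ} {R : Fin n → ℝ}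
    (hf : ∀ j, ContinuousOn (f j) (sphere (c j) |R j|)) :
    TorusIntegrable (fun x => ∏ j, f j (x j)) c R := by
  have hcont : Continuous fun θ : Fin n → ℝ => ∏ j, f j (circleMap (c j) (R j) (θ j)) :=
    continuous_finsetProd _ fun j _ => (hf j).comp_continuous
      ((continuous_circleMap _ _).comp (continuous_apply j)) fun θ => circleMap_mem_sphere' _ _ _
  exact hcont.continuousOn.integrableOn_compact isCompact_Icc

theorem torusIntegral_prod {n : ℕ} {f : Fin n → ℂ → ℂ} {c : Fin n → ℂ} {R : Fin n → ℝ}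
    (hf : ∀ j, ContinuousOn (f j) (sphere (c j) |R j|)) :
    (∯ x in T(c, R), ∏ j, f j (x j)) = ∏ j, ∮ z in C(c j, R j), f j z := by
  induction n with
  | zero => simp
  | succ n ih =>
    rw [torusIntegral_succ (torusIntegrable_prod hf)]
    simp only [Fin.prod_univ_succ, Fin.cons_zero, Fin.cons_succ, torusIntegral_const_mul]
    rw [ih (c := c ∘ Fin.succ) (R := R ∘ Fin.succ) fun j => hf j.succ]
    exact circleIntegral.integral_smul_const (f 0) _ (c 0) (R 0)

theorem torusIntegral_prod_zpow {n : ℕ} {R : Fin n → ℝ} (hR : ∀ j, R j ≠ 0) (a : Fin n → ℤ) :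
    (∯ x in T(0, R), ∏ j, x j ^ a j) = if a = -1 then (2 * Real.pi * I) ^ n else 0 := by
  rw [torusIntegral_prod (c := 0) fun j => continuousOn_zpow_sphere_zero (hR j) (a j)]
  simp only [Pi.zero_apply, circleIntegral_zpow (hR _), Finset.prod_ite_zero, funext_iff,
    Pi.neg_apply, Pi.one_apply, Finset.prod_const, Finset.card_univ, Fintype.card_fin,
    Finset.mem_univ, true_imp_iff]

theorem hasSum_torusIntegral_of_norm_le {ι E : Type*} [Countable ι] [NormedAddCommGroup E]
    [NormedSpace ℂ E] {n : ℕ} {f : ι → (Fin n → ℂ) → E} {g : (Fin n → ℂ) → E}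
    {c : Fin n → ℂ} {R : Fin n → ℝ} {C : ι → ℝ} (hf : ∀ i, TorusIntegrable (f i) c R)
    (hfC : ∀ i θ, ‖f i (torusMap c R θ)‖ ≤ C i) (hC : Summable C)
    (hfg : ∀ θ, HasSum (fun i => f i (torusMap c R θ)) (g (torusMap c R θ))) :
    HasSum (fun i => ∯ x in T(c, R), f i x) (∯ x in T(c, R), g x) := by
  refine hasSum_integral_of_dominated_convergence (fun i _ => (∏ j, |R j|) * C i)
    (fun i => (hf i).function_integrable.aestronglyMeasurable) (fun i => ?_)
    (.of_forall fun _ => hC.mul_left _) (integrableOn_const measure_Icc_lt_top.ne)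
    (.of_forall fun θ => (hfg θ).const_smul _)
  refine .of_forall fun θ => ?_
  simp only [norm_smul, norm_prod, norm_mul, norm_exp_ofReal_mul_I, norm_I, norm_real,
    Real.norm_eq_abs, mul_one]
  exact mul_le_mul_of_nonneg_left (hfC i θ) (by positivity)

theorem hasSum_pow_div_pow_succ {K : Type*} [NormedField K] [CompleteSpace K] {u w : K}
    (h : ‖w‖ < ‖u‖) : HasSum (fun p : ℕ => w ^ p / u ^ (p + 1)) (u - w)⁻¹ := by
  have hu : u ≠ 0 := norm_pos_iff.1 ((norm_nonneg w).trans_lt h)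
  have huw : u - w ≠ 0 := sub_ne_zero.2 fun h' => h.ne (by rw [h'])
  have hwu : ‖w / u‖ < 1 := by rwa [norm_div, div_lt_one (norm_pos_iff.2 hu)]
  rw [show (u - w)⁻¹ = u⁻¹ * (1 - w / u)⁻¹ by field_simp]
  refine ((hasSum_geometric_of_norm_lt_one hwu).mul_left u⁻¹).congr_fun fun p => ?_
  rw [div_pow, pow_succ]
  field_simp

theorem prod_zpow_sub_succ_mul_sub_one {K : Type*} [Field K] {n : ℕ} {x : Fin n → K}
    (hx : ∀ j, x j ≠ 0) (k m : Fin n → ℕ) (p : ℕ) :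
    ∏ j, x j ^ ((m j : ℤ) - (p + 1) * k j - 1)
      = (∏ j, x j ^ m j) / (∏ j, x j) / (∏ j, x j ^ k j) ^ (p + 1) := by
  have (j : Fin n) :
      x j ^ ((m j : ℤ) - (p + 1) * k j - 1) = x j ^ m j / x j / (x j ^ k j) ^ (p + 1) := by
    rw [show (m j : ℤ) - (p + 1) * k j - 1 = (m j : ℤ) - ((k j * (p + 1) : ℕ) : ℤ) - 1 by
        push_cast; ring,
      zpow_sub₀ (hx j), zpow_sub₀ (hx j), zpow_one, zpow_natCast, zpow_natCast, pow_mul,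
      div_right_comm]
  simp only [this, Finset.prod_div_distrib, Finset.prod_pow]

theorem hasSum_pow_mul_prod_zpow {n : ℕ} {ζ : Fin n → ℂ} (hζ : ∀ j, ζ j ≠ 0) (k m : Fin n → ℕ)
    {w : ℂ} (hw : ‖w‖ < ‖∏ j, ζ j ^ k j‖) :
    HasSum (fun p : ℕ => w ^ p * ∏ j, ζ j ^ ((m j : ℤ) - (p + 1) * k j - 1))
      ((∏ j, ζ j ^ m j) / (((∏ j, ζ j ^ k j) - w) * ∏ j, ζ j)) := by
  rw [div_mul_eq_div_div_swap, div_eq_mul_inv]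
  refine ((hasSum_pow_div_pow_succ hw).mul_left _).congr_fun fun p => ?_
  rw [prod_zpow_sub_succ_mul_sub_one hζ]
  ring

theorem hasSum_torusIntegral_kernel {n : ℕ} {ρ : Fin n → ℝ} (hρ : ∀ j, 0 < ρ j)
    (k m : Fin n → ℕ) {w : ℂ} (hw : ‖w‖ < ∏ j, ρ j ^ k j) :
    HasSum
      (fun p : ℕ => w ^ p * if m = (fun j => (p + 1) * k j) then (2 * Real.pi * I) ^ n else 0)
      (∯ ζ in T(0, ρ), (∏ j, ζ j ^ m j) / (((∏ j, ζ j ^ k j) - w) * ∏ j, ζ j)) := by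
  set a : ℕ → Fin n → ℤ := fun p j => (m j : ℤ) - (p + 1) * k j - 1
  have hρ0 (j : Fin n) : ρ j ≠ 0 := (hρ j).ne'
  have hnorm (θ : Fin n → ℝ) (j : Fin n) : ‖torusMap 0 ρ θ j‖ = ρ j := by
    rw [norm_torusMap_zero_apply, abs_of_pos (hρ j)]
  have hζ (θ : Fin n → ℝ) (j : Fin n) : torusMap 0 ρ θ j ≠ 0 :=
    norm_ne_zero_iff.1 (by rw [hnorm]; exact hρ0 j)
  have hexp (p : ℕ) : a p = -1 ↔ m = fun j => (p + 1) * k j := by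
    simp only [funext_iff, a, Pi.neg_apply, Pi.one_apply]
    exact forall_congr' fun j => by zify; omega
  set C : ℕ → ℝ := fun p =>
    (∏ j, ρ j ^ m j) / (∏ j, ρ j) * (‖w‖ ^ p / (∏ j, ρ j ^ k j) ^ (p + 1))
  have hC : Summable C := by
    refine (hasSum_pow_div_pow_succ (u := ∏ j, ρ j ^ k j) ?_).summable.mul_left _
    rwa [norm_norm, Real.norm_of_nonneg (Finset.prod_nonneg fun j _ => pow_nonneg (hρ j).le _)]
  have hfC (p : ℕ) (θ : Fin n → ℝ) : ‖w ^ p * ∏ j, torusMap 0 ρ θ j ^ a p j‖ ≤ C p := by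
    simp only [a, prod_zpow_sub_succ_mul_sub_one (hζ θ), norm_mul, norm_div, norm_pow, norm_prod,
      hnorm, C]
    exact le_of_eq (by ring)
  have hf (p : ℕ) : TorusIntegrable (fun ζ => w ^ p * ∏ j, ζ j ^ a p j) 0 ρ :=
    Integrable.const_mul
      (torusIntegrable_prod fun j => continuousOn_zpow_sphere_zero (hρ0 j) (a p j)) (w ^ p)
  refine (hasSum_torusIntegral_of_norm_le hf hfC hC fun θ =>
    hasSum_pow_mul_prod_zpow (hζ θ) k m ?_).congr_fun fun p => ?_
  · simpa only [norm_prod, norm_pow, hnorm] using hw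
  · rw [torusIntegral_const_mul, torusIntegral_prod_zpow hρ0, if_congr (hexp p) rfl rfl]

/-- Orthogonality relations for the Temlyakov-type kernel: for a
multi-index `k ≠ 0` and `|z^k| < ρ^k`, the torus integral
`(z^k/(2πi)ⁿ) ∯_{|ζⱼ|=ρⱼ} ζ^m / ((ζ^k - z^k)·∏ⱼ ζⱼ) dζ` equals `z^m` when `m = l·k`
for some integer `l ≥ 1`, and `0` otherwise. -/
theorem stmt_10 (n : ℕ) (ρ : Fin n → ℝ) (hρ : ∀ j, 0 < ρ j)
    (k m : Fin n → ℕ) (hk : k ≠ 0) (z : Fin n → ℂ)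
    (hz : ‖∏ j, z j ^ k j‖ < ∏ j, ρ j ^ k j) :
    ((∃ l : ℕ, 1 ≤ l ∧ m = fun j => l * k j) →
      (∏ j, z j ^ k j) / (2 * Real.pi * Complex.I) ^ n *
        torusIntegral (fun ζ => (∏ j, ζ j ^ m j) /
          (((∏ j, ζ j ^ k j) - ∏ j, z j ^ k j) * ∏ j, ζ j)) 0 ρ
        = ∏ j, z j ^ m j) ∧
    ((¬ ∃ l : ℕ, 1 ≤ l ∧ m = fun j => l * k j) →
      (∏ j, z j ^ k j) / (2 * Real.pi * Complex.I) ^ n *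
        torusIntegral (fun ζ => (∏ j, ζ j ^ m j) /
          (((∏ j, ζ j ^ k j) - ∏ j, z j ^ k j) * ∏ j, ζ j)) 0 ρ
        = 0) := by
  have hT := hasSum_torusIntegral_kernel hρ k m hz
  constructor
  · rintro ⟨l, hl, rfl⟩
    obtain ⟨l, rfl⟩ : ∃ l', l = l' + 1 := ⟨l - 1, by omega⟩
    obtain ⟨j₀, hj₀⟩ := Function.ne_iff.1 hk
    rw [hT.unique (hasSum_single l fun p hp => ?_), if_pos rfl]
    · have h2πI : (2 * Real.pi * I : ℂ) ^ n ≠ 0 :=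
        pow_ne_zero _ (by simp [Real.pi_ne_zero, I_ne_zero])
      simp only [pow_mul', Finset.prod_pow]
      field_simp
      ring
    · rw [if_neg fun h => hp ?_, mul_zero]
      have := Nat.eq_of_mul_eq_mul_right (Nat.pos_of_ne_zero hj₀) (congrFun h j₀)
      omega
  · intro hm
    rw [hT.unique (hasSum_zero.congr_fun fun p => ?_), mul_zero]
    rw [if_neg fun h => hm ⟨p + 1, by omega, h⟩, mul_zero]
end

section
/- Let ρ ∈ (ℝ_{>0})ⁿ, let k ∈ ℕⁿ be a multi-index with k ≠ 0, let 0 < r < s < 1, and let f : ℂⁿ → ℂ be holomorphic on the open polydisc P(ρ). Define Q f : P(ρ) → ℂ by Q f(z) := (z^k/(2πi)ⁿ) · ∯_{|ζ_j|=s·ρ_j} f(ζ) / ((ζ^k − z^k) · ∏_{j=1}^n ζ_j) dζ. Then for every z ∈ ℂⁿ with |z_j| ≤ r·ρ_j for all j, |Q f(z)| ≤ (r^{|k|}/(s^{|k|} − r^{|k|})) · sup{|f(ζ)| : |ζ_j| = s·ρ_j for all j}. -/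
/-! On the torus `|ζⱼ| = s ρⱼ` one has `|ζ^k| = s^|k| ρ^k`, while `|z^k| ≤ r^|k| ρ^k`, so
`|ζ^k - z^k| ≥ (s^|k| - r^|k|) ρ^k > 0` there. Hence the integrand
`f(ζ)/(ζ^k - z^k)` against the Cauchy kernel `1/∏ ζⱼ` is bounded by `sup |f| / ((s^|k| - r^|k|) ρ^k)`,
the standard estimate `‖(2πi)⁻ⁿ ∯ g(ζ)/∏ ζⱼ‖ ≤ sup |g|` applies, and the prefactor `|z^k| ≤ r^|k| ρ^k`
cancels `ρ^k`. The supremum is finite because `f` is continuous on the compact torus, which lies in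
the polydisc as `s < 1`. -/

open Finset

theorem IsCompact.norm_le_biSup {X E : Type*} [TopologicalSpace X] [SeminormedAddCommGroup E]
    {f : X → E} {T : Set X} (hT : IsCompact T) (hf : ContinuousOn f T) {x : X} (hx : x ∈ T) :
    ‖f x‖ ≤ ⨆ y ∈ T, ‖f y‖ :=
  le_ciSup₂ (f := fun y (_ : y ∈ T) => ‖f y‖)
    ((hT.bddAbove_image hf.norm).mono <| Set.iUnion_subset fun _ =>
      Set.range_subset_iff.2 fun hy => Set.mem_image_of_mem (‖f ·‖) hy) x hx

theorem isCompact_setOf_forall_norm_eq {ι E : Type*} [Finite ι] [SeminormedAddCommGroup E]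
    [ProperSpace E] (τ : ι → ℝ) : IsCompact {ζ : ι → E | ∀ j, ‖ζ j‖ = τ j} := by
  convert isCompact_univ_pi fun j => isCompact_sphere (0 : E) (τ j)
  simp [Set.ext_iff]

section Monomial

variable {ι 𝕜 : Type*} [Fintype ι] [NormedField 𝕜] (k : ι → ℕ)

theorem norm_prod_pow_le_s11 {z : ι → 𝕜} {r : ℝ} {ρ : ι → ℝ} (hz : ∀ j, ‖z j‖ ≤ r * ρ j) :
    ‖∏ j, z j ^ k j‖ ≤ r ^ (∑ j, k j) * ∏ j, ρ j ^ k j := by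
  rw [norm_prod, ← prod_pow_eq_pow_sum, ← prod_mul_distrib]
  refine prod_le_prod (fun j _ => norm_nonneg _) fun j _ => ?_
  rw [norm_pow, ← mul_pow]
  exact pow_le_pow_left₀ (norm_nonneg _) (hz j) _

theorem norm_prod_pow_of_norm_eq {ζ : ι → 𝕜} {s : ℝ} {ρ : ι → ℝ} (hζ : ∀ j, ‖ζ j‖ = s * ρ j) :
    ‖∏ j, ζ j ^ k j‖ = s ^ (∑ j, k j) * ∏ j, ρ j ^ k j := by
  simp only [norm_prod, norm_pow, hζ, mul_pow, prod_mul_distrib, prod_pow_eq_pow_sum]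

theorem sub_mul_prod_pow_le_norm_sub {ζ z : ι → 𝕜} {r s : ℝ} {ρ : ι → ℝ}
    (hζ : ∀ j, ‖ζ j‖ = s * ρ j) (hz : ∀ j, ‖z j‖ ≤ r * ρ j) :
    (s ^ (∑ j, k j) - r ^ (∑ j, k j)) * ∏ j, ρ j ^ k j ≤
      ‖∏ j, ζ j ^ k j - ∏ j, z j ^ k j‖ := by
  have := norm_sub_norm_le (∏ j, ζ j ^ k j) (∏ j, z j ^ k j)
  rw [norm_prod_pow_of_norm_eq k hζ] at this
  linarith [norm_prod_pow_le_s11 k hz]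

end Monomial

theorem norm_torusIntegral_div_prod_le {n : ℕ} {R : Fin n → ℝ} (hR : ∀ j, 0 < R j)
    {g : (Fin n → ℂ) → ℂ} {C : ℝ} (hg : ∀ ζ : Fin n → ℂ, (∀ j, ‖ζ j‖ = R j) → ‖g ζ‖ ≤ C) :
    ‖torusIntegral (fun ζ => g ζ / ∏ j, ζ j) 0 R‖ ≤ (2 * Real.pi) ^ n * C := by
  have hRprod : 0 < ∏ j, R j := prod_pos fun j _ => hR j
  have hnorm : ∀ θ j, ‖torusMap 0 R θ j‖ = R j := fun θ j => by
    simp [torusMap, Complex.norm_exp, abs_of_pos (hR j)]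
  calc ‖torusIntegral (fun ζ => g ζ / ∏ j, ζ j) 0 R‖
      ≤ (2 * Real.pi) ^ n * (∏ j, |R j|) * (C / ∏ j, R j) := by
        refine norm_torusIntegral_le_of_norm_le_const fun θ => ?_
        rw [norm_div, norm_prod, prod_congr rfl fun j _ => hnorm θ j]
        exact div_le_div_of_nonneg_right (hg _ (hnorm θ)) hRprod.le
    _ = (2 * Real.pi) ^ n * C := by
        rw [prod_congr rfl fun j _ => abs_of_pos (hR j)]
        field_simp

theorem norm_two_pi_I : ‖2 * Real.pi * Complex.I‖ = 2 * Real.pi := by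
  simp [Real.pi_pos.le]

/-- Estimate for the projection integral: for `f` holomorphic on the
polydisc `P(ρ)`, a multi-index `k ≠ 0` and `0 < r < s < 1`, the function
`Q f(z) = (z^k/(2πi)ⁿ) ∯_{|ζⱼ|=s·ρⱼ} f(ζ)/((ζ^k - z^k)·∏ⱼ ζⱼ) dζ` satisfies
`|Q f(z)| ≤ (r^{|k|}/(s^{|k|} - r^{|k|})) · sup_{|ζⱼ|=s·ρⱼ} |f|` for
`|zⱼ| ≤ r·ρⱼ`. -/
theorem stmt_11 (n : ℕ) (ρ : Fin n → ℝ) (hρ : ∀ j, 0 < ρ j)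
    (k : Fin n → ℕ) (hk : k ≠ 0)
    (r s : ℝ) (hr : 0 < r) (hrs : r < s) (hs : s < 1)
    (f : (Fin n → ℂ) → ℂ)
    (hf : DifferentiableOn ℂ f {z : Fin n → ℂ | ∀ j, ‖z j‖ < ρ j})
    (z : Fin n → ℂ) (hz : ∀ j, ‖z j‖ ≤ r * ρ j) :
    ‖(∏ j, z j ^ k j) / (2 * Real.pi * Complex.I) ^ n *
        torusIntegral (fun ζ => f ζ /
          (((∏ j, ζ j ^ k j) - ∏ j, z j ^ k j) * ∏ j, ζ j)) 0 (fun j => s * ρ j)‖ ≤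
      r ^ (∑ j, k j) / (s ^ (∑ j, k j) - r ^ (∑ j, k j)) *
        ⨆ ζ ∈ {ζ : Fin n → ℂ | ∀ j, ‖ζ j‖ = s * ρ j}, ‖f ζ‖ := by
  set M := ⨆ ζ ∈ {ζ : Fin n → ℂ | ∀ j, ‖ζ j‖ = s * ρ j}, ‖f ζ‖
  set K := ∑ j, k j
  set P := ∏ j, ρ j ^ k j
  have hP : 0 < P := prod_pos fun j _ => pow_pos (hρ j) _
  have hK : K ≠ 0 := fun h => hk (funext fun j => sum_eq_zero_iff.1 h j (mem_univ j))
  have hgap : 0 < s ^ K - r ^ K := sub_pos.2 (pow_lt_pow_left₀ hrs hr.le hK)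
  have hfM : ∀ ζ : Fin n → ℂ, (∀ j, ‖ζ j‖ = s * ρ j) → ‖f ζ‖ ≤ M := fun ζ hζ =>
    (isCompact_setOf_forall_norm_eq _).norm_le_biSup (hf.continuousOn.mono fun ζ hζ j =>
      (hζ j).trans_lt (mul_lt_of_lt_one_left (hρ j) hs)) hζ
  have hM : 0 ≤ M := Real.iSup_nonneg fun ζ => Real.iSup_nonneg fun _ => norm_nonneg (f ζ)
  have hint := norm_torusIntegral_div_prod_le (fun j => mul_pos (hr.trans hrs) (hρ j))
    (g := fun ζ => f ζ / (∏ j, ζ j ^ k j - ∏ j, z j ^ k j)) (C := M / ((s ^ K - r ^ K) * P))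
    fun ζ hζ => by
      rw [norm_div]
      exact div_le_div₀ hM (hfM ζ hζ) (by positivity) (sub_mul_prod_pow_le_norm_sub k hζ hz)
  simp only [div_div] at hint
  rw [norm_mul, norm_div, norm_pow, norm_two_pi_I]
  calc ‖∏ j, z j ^ k j‖ / (2 * Real.pi) ^ n * _
      ≤ r ^ K * P / (2 * Real.pi) ^ n * ((2 * Real.pi) ^ n * (M / ((s ^ K - r ^ K) * P))) := by
        gcongr
        exact norm_prod_pow_le_s11 k hz
    _ = r ^ K / (s ^ K - r ^ K) * M := by
        field_simp
end

section
/- Let G ⊆ ℂⁿ be a bounded complete n-circled domain, let k ∈ ℕⁿ be a multi-index with k ≠ 0, and let ρ ∈ (ℝ_{>0})ⁿ be such that the open polydisc P(ρ) is contained in G and |z^k| ≤ ρ^k for every z ∈ G. Let f : ℂⁿ → ℂ and c : ℕ → ℂ be such that for every z ∈ G the family (c_l · z^{l·k})_{l ≥ 1} is absolutely summable with sum f(z). Then for all 0 < r < s < 1, sup_{z ∈ r•closure(G)} |f(z)| ≤ (r^{|k|}/(s^{|k|} − r^{|k|})) · sup_{z ∈ s•closure(P(ρ))} |f(z)|. 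-/
/-!
Write `ζ = ∏ j, z j ^ k j`, so that `f z = F ζ` with `F ζ = ∑_{m ≥ 1} c m * ζ ^ m`. Along the
diagonal `z = u • ρ` of the polydisc, `ζ = u ^ |k| * ρ ^ k` sweeps out the disc `‖ζ‖ < ρ ^ k`, and
the circle `‖ζ‖ = s ^ |k| * ρ ^ k` is the image of the circle `‖u‖ = s`, which lies in
`s • closure P(ρ)`. Cauchy's estimate for `F` on that circle bounds `‖c m‖ * (s ^ |k| * ρ ^ k) ^ m`
by `M = sup_{s • closure P(ρ)} ‖f‖`. On `r • closure G` we have `‖ζ‖ ≤ r ^ |k| * ρ ^ k`, so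
`‖f‖ ≤ M * ∑_{m ≥ 1} ((r / s) ^ |k|) ^ m = M * r ^ |k| / (s ^ |k| - r ^ |k|)`.
-/

open scoped Pointwise

theorem sum_ne_zero_of_ne_zero {ι : Type*} [Fintype ι] {k : ι → ℕ} (hk : k ≠ 0) :
    ∑ j, k j ≠ 0 := by
  simpa [Finset.sum_eq_zero_iff, funext_iff] using hk

theorem prod_mul_pow_eq {ι R : Type*} [Fintype ι] [CommMonoid R] (u : R) (z : ι → R)
    (k : ι → ℕ) : ∏ j, (u * z j) ^ k j = u ^ (∑ j, k j) * ∏ j, z j ^ k j := by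
  simp only [mul_pow, Finset.prod_mul_distrib, Finset.prod_pow_eq_pow_sum]

theorem prod_pow_mul_eq_pow {ι R : Type*} [Fintype ι] [CommMonoid R] (z : ι → R)
    (k : ι → ℕ) (m : ℕ) : ∏ j, z j ^ (m * k j) = (∏ j, z j ^ k j) ^ m := by
  simp only [pow_mul', Finset.prod_pow]

theorem le_ciSup₂_of_forall_le {α : Type*} {g : α → ℝ} {S : Set α} {C : ℝ}
    (hC : ∀ z ∈ S, g z ≤ C) {z : α} (hz : z ∈ S) : g z ≤ ⨆ z ∈ S, g z :=
  le_ciSup₂ (f := fun z (_ : z ∈ S) => g z) ⟨C, fun _ hx => by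
    obtain ⟨i, hi, rfl⟩ := by simpa using hx
    exact hC i hi⟩ z hz

section Polydisc

variable {ι E : Type*} [NormedAddCommGroup E] [NormedSpace ℝ E]

theorem closure_setOf_forall_norm_lt {ρ : ι → ℝ} (hρ : ∀ j, ρ j ≠ 0) :
    closure {z : ι → E | ∀ j, ‖z j‖ < ρ j} = {z | ∀ j, ‖z j‖ ≤ ρ j} := by
  simpa [Set.pi, closure_ball _ (hρ _)] using
    closure_pi_set Set.univ fun j => Metric.ball (0 : E) (ρ j)

theorem mem_smul_closure_setOf_forall_norm_lt_iff {ρ : ι → ℝ} (hρ : ∀ j, ρ j ≠ 0) {s : ℝ}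
    (hs : 0 < s) {z : ι → E} :
    z ∈ s • closure {z : ι → E | ∀ j, ‖z j‖ < ρ j} ↔ ∀ j, ‖z j‖ ≤ s * ρ j := by
  simp [closure_setOf_forall_norm_lt hρ, Set.mem_smul_set_iff_inv_smul_mem₀ hs.ne', norm_smul,
    abs_of_pos hs, inv_mul_le_iff₀ hs]

theorem smul_mem_of_mem_closure [Finite ι] {G : Set (ι → E)}
    (hG : ∀ z ∈ G, ∀ w : ι → E, (∀ j, ‖w j‖ ≤ ‖z j‖) → w ∈ G)
    {t : ℝ} (ht : |t| < 1) {w : ι → E} (hw : w ∈ closure G) : t • w ∈ G := by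
  -- a point of `G` close enough to `w` dominates `t • w` coordinatewise
  set V := {v : ι → E | ∀ j, w j = 0 ∨ |t| * ‖w j‖ < ‖v j‖}
  have hV : IsOpen V := by
    simp only [V, Set.ofPred_forall, Set.ofPred_or]
    exact isOpen_iInter_of_finite fun j =>
      isOpen_const.union (isOpen_lt continuous_const (continuous_apply j).norm)
  have hwV : w ∈ V := fun j =>
    (eq_or_ne (w j) 0).imp_right fun h => mul_lt_of_lt_one_left (norm_pos_iff.2 h) ht
  obtain ⟨z, hzV, hzG⟩ := mem_closure_iff.mp hw V hV hwV
  refine hG z hzG _ fun j => ?_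
  rw [Pi.smul_apply, norm_smul, Real.norm_eq_abs]
  rcases hzV j with h | h
  · simp [h]
  · exact h.le

end Polydisc

section OneVariable

open FormalMultilinearSeries

theorem hasFPowerSeriesOnBall_ofScalars_of_hasSum {a : ℕ → ℂ} {g : ℂ → ℂ} {R : ℝ} (hR : 0 < R)
    (hg : ∀ u : ℂ, ‖u‖ < R → HasSum (fun m => a m * u ^ m) (g u)) :
    HasFPowerSeriesOnBall g (ofScalars ℂ a) 0 (ENNReal.ofReal R) where
  r_le := ENNReal.le_of_forall_pos_nnreal_lt fun t _ htR => by
    refine (ofScalars ℂ a).le_radius_of_summable_norm ?_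
    have ht : ‖(t : ℂ)‖ < R := by
      rw [← ENNReal.ofReal_coe_nnreal, ENNReal.ofReal_lt_ofReal_iff hR] at htR
      simpa using htR
    simpa [ofScalars_norm] using summable_norm_iff.mpr (hg t ht).summable
  r_pos := by simpa using hR
  hasSum {y} hy := by
    simpa [ofScalars_apply_eq, mul_comm] using hg y (by simpa using hy)

theorem norm_mul_pow_le_of_hasSum {a : ℕ → ℂ} {g : ℂ → ℂ} {R s M : ℝ} (hs : 0 < s) (hsR : s < R)
    (hg : ∀ u : ℂ, ‖u‖ < R → HasSum (fun m => a m * u ^ m) (g u))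
    (hM : ∀ u : ℂ, ‖u‖ = s → ‖g u‖ ≤ M) (m : ℕ) : ‖a m‖ * s ^ m ≤ M := by
  have hp := hasFPowerSeriesOnBall_ofScalars_of_hasSum (hs.trans hsR) hg
  have hcoeff : a = fun n => iteratedDeriv n g 0 / n.factorial :=
    ofScalars_series_injective ℂ ℂ <|
      hp.hasFPowerSeriesAt.eq_formalMultilinearSeries hp.analyticAt.hasFPowerSeriesAt
  have hdiff : DiffContOnCl ℂ g (Metric.ball 0 s) := by
    refine (hp.differentiableOn.mono fun u hu => ?_).diffContOnCl
    rw [closure_ball _ hs.ne', mem_closedBall_zero_iff] at hu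
    simpa using hu.trans_lt hsR
  have hcauchy := Complex.norm_iteratedDeriv_le_of_forall_mem_sphere_norm_le m hs hdiff
    fun u hu => hM u (mem_sphere_zero_iff_norm.mp hu)
  rw [hcoeff, norm_div, Complex.norm_natCast, div_mul_eq_mul_div, div_le_iff₀ (by positivity),
    mul_comm M]
  rwa [le_div_iff₀ (by positivity)] at hcauchy

theorem norm_le_of_hasSum_of_norm_coeff_mul_pow_le {c : ℕ → ℂ} {ζ x : ℂ} {ρ₁ ρ₂ M : ℝ}
    (hρ₁ : 0 ≤ ρ₁) (hρ₁₂ : ρ₁ < ρ₂) (hx : HasSum (fun l => c (l + 1) * ζ ^ (l + 1)) x)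
    (hζ : ‖ζ‖ ≤ ρ₁) (hc : ∀ l, ‖c (l + 1)‖ * ρ₂ ^ (l + 1) ≤ M) :
    ‖x‖ ≤ ρ₁ / (ρ₂ - ρ₁) * M := by
  have hρ₂ : 0 < ρ₂ := hρ₁.trans_lt hρ₁₂
  set q := ρ₁ / ρ₂
  have hq : 0 ≤ q := div_nonneg hρ₁ hρ₂.le
  have hq1 : q < 1 := (div_lt_one hρ₂).mpr hρ₁₂
  have hgeom : HasSum (fun l => q * M * q ^ l) (q * M * (1 - q)⁻¹) :=
    (hasSum_geometric_of_lt_one hq hq1).mul_left _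
  have hterm : ∀ l, ‖c (l + 1) * ζ ^ (l + 1)‖ ≤ q * M * q ^ l := fun l =>
    calc ‖c (l + 1) * ζ ^ (l + 1)‖ ≤ ‖c (l + 1)‖ * (ρ₂ * q) ^ (l + 1) := by
          rw [norm_mul, norm_pow, mul_div_cancel₀ _ hρ₂.ne']
          gcongr
      _ ≤ M * q ^ (l + 1) := by
          rw [mul_pow, ← mul_assoc]
          exact mul_le_mul_of_nonneg_right (hc l) (by positivity)
      _ = q * M * q ^ l := by ring
  refine (hx.norm_le_of_bounded hgeom hterm).trans_eq ?_
  have hρ₂₁ : ρ₂ - ρ₁ ≠ 0 := (sub_pos.mpr hρ₁₂).ne'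
  have hρ₂' : ρ₂ ≠ 0 := hρ₂.ne'
  simp only [q]
  field_simp

end OneVariable

section Monomial

variable {ι : Type*} [Fintype ι] {ρ : ι → ℝ} {k : ι → ℕ} {f : (ι → ℂ) → ℂ} {c : ℕ → ℂ}

theorem exists_prod_mul_pow_eq (hρ : ∀ j, 0 < ρ j) (hk : k ≠ 0) (ζ : ℂ) :
    ∃ u : ℂ, ∏ j, (u * ρ j) ^ k j = ζ ∧ ‖u‖ ^ (∑ j, k j) * ∏ j, ρ j ^ k j = ‖ζ‖ := by
  have hR : (0 : ℝ) < ∏ j, ρ j ^ k j := Finset.prod_pos fun j _ => pow_pos (hρ j) _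
  obtain ⟨u, hu⟩ := IsAlgClosed.exists_pow_nat_eq (ζ / (∏ j, ρ j ^ k j : ℝ))
    (Nat.pos_of_ne_zero (sum_ne_zero_of_ne_zero hk))
  have hζ : ζ = u ^ (∑ j, k j) * (∏ j, ρ j ^ k j : ℝ) := by
    rw [hu, div_mul_cancel₀ _ (by exact_mod_cast hR.ne')]
  refine ⟨u, by rw [prod_mul_pow_eq, hζ]; push_cast; rfl, ?_⟩
  rw [hζ, norm_mul, norm_pow, Complex.norm_real, Real.norm_of_nonneg hR.le]

theorem exists_forall_norm_le_of_mem_smul_closure (hρ : ∀ j, 0 < ρ j)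
    (hf : ∀ z : ι → ℂ, (∀ j, ‖z j‖ < ρ j) →
      HasSum (fun l => c (l + 1) * (∏ j, z j ^ k j) ^ (l + 1)) (f z))
    {s : ℝ} (hs : 0 < s) (hs1 : s < 1) :
    ∃ C, ∀ z ∈ s • closure {z : ι → ℂ | ∀ j, ‖z j‖ < ρ j}, ‖f z‖ ≤ C := by
  set ξ := ∏ j, ((s : ℂ) * ρ j) ^ k j
  have hsρ : ∀ j, ‖(s : ℂ) * ρ j‖ = s * ρ j := fun j => by
    rw [norm_mul, Complex.norm_real, Complex.norm_real, Real.norm_of_nonneg hs.le,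
      Real.norm_of_nonneg (hρ j).le]
  have hξ : Summable fun l => ‖c (l + 1) * ξ ^ (l + 1)‖ := summable_norm_iff.mpr
    (hf _ fun j => (hsρ j).trans_lt (mul_lt_of_lt_one_left (hρ j) hs1)).summable
  refine ⟨∑' l, ‖c (l + 1) * ξ ^ (l + 1)‖, fun z hz => ?_⟩
  rw [mem_smul_closure_setOf_forall_norm_lt_iff (fun j => (hρ j).ne') hs] at hz
  refine (hf z fun j => (hz j).trans_lt (mul_lt_of_lt_one_left (hρ j) hs1)).norm_le_of_bounded
    hξ.hasSum fun l => ?_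
  simp only [norm_mul, norm_pow, norm_prod, ξ, hsρ]
  gcongr
  exact hz _

theorem norm_coeff_mul_pow_le_iSup (hρ : ∀ j, 0 < ρ j) (hk : k ≠ 0)
    (hf : ∀ z : ι → ℂ, (∀ j, ‖z j‖ < ρ j) →
      HasSum (fun l => c (l + 1) * (∏ j, z j ^ k j) ^ (l + 1)) (f z))
    {s : ℝ} (hs : 0 < s) (hs1 : s < 1) (l : ℕ) :
    ‖c (l + 1)‖ * (s ^ (∑ j, k j) * ∏ j, ρ j ^ k j) ^ (l + 1) ≤
      ⨆ z ∈ s • closure {z : ι → ℂ | ∀ j, ‖z j‖ < ρ j}, ‖f z‖ := by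
  set N := ∑ j, k j
  set R := ∏ j, ρ j ^ k j
  have hN : N ≠ 0 := sum_ne_zero_of_ne_zero hk
  have hR : 0 < R := Finset.prod_pos fun j _ => pow_pos (hρ j) _
  have hdiag : ∀ u : ℂ, ‖u‖ < 1 → ∀ j, ‖u * ρ j‖ < ρ j := fun u hu j => by
    rw [norm_mul, Complex.norm_real, Real.norm_of_nonneg (hρ j).le]
    exact mul_lt_of_lt_one_left (hρ j) hu
  set F : ℂ → ℂ := fun ζ => ∑' l, c (l + 1) * ζ ^ (l + 1)
  have hF : ∀ ζ : ℂ, ‖ζ‖ < R → HasSum (fun l => c (l + 1) * ζ ^ (l + 1)) (F ζ) := by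
    intro ζ hζ
    obtain ⟨u, rfl, hu⟩ := exists_prod_mul_pow_eq hρ hk ζ
    have hu1 : ‖u‖ < 1 := by
      rw [← hu] at hζ
      exact (pow_lt_one_iff_of_nonneg (norm_nonneg u) hN).mp ((mul_lt_iff_lt_one_left hR).mp hζ)
    exact (hf _ (hdiag u hu1)).summable.hasSum
  have hM : ∀ ζ : ℂ, ‖ζ‖ = s ^ N * R →
      ‖F ζ‖ ≤ ⨆ z ∈ s • closure {z : ι → ℂ | ∀ j, ‖z j‖ < ρ j}, ‖f z‖ := by
    intro ζ hζ
    obtain ⟨u, rfl, hu⟩ := exists_prod_mul_pow_eq hρ hk ζ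
    have hus : ‖u‖ = s := by
      rw [← hu, mul_left_inj' hR.ne'] at hζ
      exact (pow_left_inj₀ (norm_nonneg u) hs.le hN).mp hζ
    obtain ⟨C, hC⟩ := exists_forall_norm_le_of_mem_smul_closure hρ hf hs hs1
    rw [show F _ = f (fun j => u * ρ j) from (hf _ (hdiag u (hus ▸ hs1))).tsum_eq]
    refine le_ciSup₂_of_forall_le hC ?_
    rw [mem_smul_closure_setOf_forall_norm_lt_iff (fun j => (hρ j).ne') hs]
    intro j
    rw [norm_mul, Complex.norm_real, Real.norm_of_nonneg (hρ j).le, hus]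
  have hsR : s ^ N * R < R := mul_lt_of_lt_one_left hR (pow_lt_one₀ hs.le hs1 hN)
  -- `F` has no constant term, so its power series has coefficients `c` with `c 0` replaced by `0`
  simpa using norm_mul_pow_le_of_hasSum (a := Function.update c 0 0) (by positivity) hsR
    (fun ζ hζ => (hasSum_nat_add_iff' 1).mp (by simpa using hF ζ hζ)) hM (l + 1)

end Monomial

theorem stmt_12_general (n : ℕ) (G : Set (Fin n → ℂ))
    (hcirc : ∀ z ∈ G, ∀ w : Fin n → ℂ, (∀ j, ‖w j‖ ≤ ‖z j‖) → w ∈ G)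
    (k : Fin n → ℕ) (hk : k ≠ 0)
    (ρ : Fin n → ℝ) (hρ : ∀ j, 0 < ρ j)
    (hPG : {z : Fin n → ℂ | ∀ j, ‖z j‖ < ρ j} ⊆ G)
    (hzk : ∀ z ∈ G, ‖∏ j, z j ^ k j‖ ≤ ∏ j, ρ j ^ k j)
    (f : (Fin n → ℂ) → ℂ) (c : ℕ → ℂ)
    (hsum : ∀ z ∈ G,
      Summable (fun l : ℕ => ‖c (l + 1) * ∏ j, z j ^ ((l + 1) * k j)‖) ∧
      HasSum (fun l : ℕ => c (l + 1) * ∏ j, z j ^ ((l + 1) * k j)) (f z))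
    (r s : ℝ) (hr : 0 < r) (hrs : r < s) (hs : s < 1) :
    (⨆ z ∈ r • closure G, ‖f z‖) ≤
      r ^ (∑ j, k j) / (s ^ (∑ j, k j) - r ^ (∑ j, k j)) *
        ⨆ z ∈ s • closure {z : Fin n → ℂ | ∀ j, ‖z j‖ < ρ j}, ‖f z‖ := by
  set N := ∑ j, k j
  set R := ∏ j, ρ j ^ k j
  set M := ⨆ z ∈ s • closure {z : Fin n → ℂ | ∀ j, ‖z j‖ < ρ j}, ‖f z‖
  have hR : 0 < R := Finset.prod_pos fun j _ => pow_pos (hρ j) _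
  have hf : ∀ z ∈ G, HasSum (fun l => c (l + 1) * (∏ j, z j ^ k j) ^ (l + 1)) (f z) :=
    fun z hz => by simpa only [prod_pow_mul_eq_pow] using (hsum z hz).2
  have hcoeff : ∀ l, ‖c (l + 1)‖ * (s ^ N * R) ^ (l + 1) ≤ M :=
    norm_coeff_mul_pow_le_iSup hρ hk (fun z hz => hf z (hPG hz)) (hr.trans hrs) hs
  have hrsN : r ^ N < s ^ N := pow_lt_pow_left₀ hrs hr.le (sum_ne_zero_of_ne_zero hk)
  have hK : 0 ≤ r ^ N / (s ^ N - r ^ N) * M := by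
    have hM : 0 ≤ M := Real.iSup_nonneg fun z => Real.iSup_nonneg fun _ => norm_nonneg (f z)
    have hsr : 0 < s ^ N - r ^ N := sub_pos.mpr hrsN
    positivity
  refine Real.iSup_le (fun z => Real.iSup_le ?_ hK) hK
  rintro ⟨w, hw, rfl⟩
  have hwk : ‖∏ j, w j ^ k j‖ ≤ R :=
    closure_minimal hzk (isClosed_le (by fun_prop) continuous_const :
      IsClosed {z : Fin n → ℂ | ‖∏ j, z j ^ k j‖ ≤ R}) hw
  have hrwk : ‖∏ j, (r • w) j ^ k j‖ ≤ r ^ N * R := by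
    simp only [Pi.smul_apply, Complex.real_smul, prod_mul_pow_eq, norm_mul, norm_pow,
      Complex.norm_real, Real.norm_of_nonneg hr.le]
    gcongr
  have hrwG : r • w ∈ G := smul_mem_of_mem_closure hcirc (by rw [abs_of_pos hr]; linarith) hw
  have hfrw := norm_le_of_hasSum_of_norm_coeff_mul_pow_le (by positivity)
    (mul_lt_mul_of_pos_right hrsN hR) (hf _ hrwG) hrwk hcoeff
  rwa [← sub_mul, mul_div_mul_right _ _ hR.ne'] at hfrw

/-- The sup norm of a function `f ∈ H_k(G)` (i.e. with expansion
`f(z) = Σ_{l≥1} c_l z^{l·k}` on `G`) over `r•closure(G)` is controlled by its sup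
norm over `s•closure(P(ρ))`, where `P(ρ) ⊆ G` and `|z^k| ≤ ρ^k` on `G`:
`‖f‖_{r•cl G} ≤ (r^{|k|}/(s^{|k|}-r^{|k|})) ‖f‖_{s•cl P(ρ)}` for `0 < r < s < 1`. -/
theorem stmt_12 (n : ℕ) (G : Set (Fin n → ℂ))
    (hop : IsOpen G) (hconn : IsConnected G) (hbd : Bornology.IsBounded G)
    (hne : G.Nonempty)
    (hcirc : ∀ z ∈ G, ∀ w : Fin n → ℂ, (∀ j, ‖w j‖ ≤ ‖z j‖) → w ∈ G)
    (k : Fin n → ℕ) (hk : k ≠ 0)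
    (ρ : Fin n → ℝ) (hρ : ∀ j, 0 < ρ j)
    (hPG : {z : Fin n → ℂ | ∀ j, ‖z j‖ < ρ j} ⊆ G)
    (hzk : ∀ z ∈ G, ‖∏ j, z j ^ k j‖ ≤ ∏ j, ρ j ^ k j)
    (f : (Fin n → ℂ) → ℂ) (c : ℕ → ℂ)
    (hsum : ∀ z ∈ G,
      Summable (fun l : ℕ => ‖c (l + 1) * ∏ j, z j ^ ((l + 1) * k j)‖) ∧
      HasSum (fun l : ℕ => c (l + 1) * ∏ j, z j ^ ((l + 1) * k j)) (f z))
    (r s : ℝ) (hr : 0 < r) (hrs : r < s) (hs : s < 1) :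
    (⨆ z ∈ r • closure G, ‖f z‖) ≤
      r ^ (∑ j, k j) / (s ^ (∑ j, k j) - r ^ (∑ j, k j)) *
        ⨆ z ∈ s • closure {z : Fin n → ℂ | ∀ j, ‖z j‖ < ρ j}, ‖f z‖ :=
  stmt_12_general n G hcirc k hk ρ hρ hPG hzk f c hsum r s hr hrs hs
end

section
/- Let G ⊆ ℂⁿ be a bounded complete n-circled domain, let f : ℂⁿ → ℂ, and let c : ℕⁿ → ℂ be such that for every z ∈ G the family (c_m · z^m)_{m ∈ ℕⁿ} is absolutely summable with sum f(z). Suppose that for every k ∈ M there is ρ(k) ∈ (ℝ_{>0})ⁿ such that P(ρ(k)) ⊆ G and |z^k| ≤ ρ(k)^k for every z ∈ G. For k ∈ M define P_k f : G → ℂ by P_k f(z) := Σ_{l=1}^∞ c_{l·k} · z^{l·k}. Then: (a) for every r ∈ (0,1), Σ_{k ∈ M} sup_{z ∈ r•closure(G)} |P_k f(z)| < ∞; (b) for every z ∈ G, f(z) = c_0 + Σ_{k ∈ M} P_k f(z); and (c) for every r ∈ (0,1), the net of finite partial sums S ↦ c_0 + Σ_{k ∈ S} P_k f (S ranging over finite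 subsets of M, directed by inclusion) converges uniformly on r•closure(G) to f. -/
/-!
Every nonzero multi-index `m` is uniquely `(l + 1) • k` with `k` primitive (`k = m / gcd m`), so
regrouping the absolutely convergent expansion `f z - c 0 = ∑_{m ≠ 0} c m z^m` along these rays
gives `∑_k P_k f z`. For uniformity, write `r = q²`: the compact set `q • closure G` lies in `G`,
where a finite cover by neighbourhoods dominated coordinatewise by points of `G` bounds all terms
`‖c m ζ^m‖` by one constant `C`. Hence on `r • closure G` each term of `P_k f` is at most
`C q^((l + 1)|k|)`, so `‖P_k f‖ ≤ C q^|k| / (1 - q)`, which is summable over all multi-indices `k`,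
and the Weierstrass M-test gives (a) and (c).
-/

open scoped Pointwise
open Filter Topology

abbrev PrimitiveIndex (ι : Type*) [Fintype ι] := {k : ι → ℕ // k ≠ 0 ∧ Finset.univ.gcd k = 1}

section PrimitiveIndex

variable {ι : Type*} [Fintype ι]

theorem Finset.univ_gcd_eq_zero_iff {m : ι → ℕ} : Finset.univ.gcd m = 0 ↔ m = 0 := by
  simp [Finset.gcd_eq_zero_iff, funext_iff]

theorem div_univ_gcd_ne_zero_and_gcd_eq_one {m : ι → ℕ} (hm : m ≠ 0) :
    (fun j => m j / Finset.univ.gcd m) ≠ 0 ∧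
      Finset.univ.gcd (fun j => m j / Finset.univ.gcd m) = 1 := by
  obtain ⟨j, hj⟩ := Function.ne_iff.mp hm
  have hgcd := Finset.gcd_div_eq_one (Finset.mem_univ j) hj
  refine ⟨fun h => ?_, hgcd⟩
  rw [h, Finset.univ_gcd_eq_zero_iff.mpr rfl] at hgcd
  exact zero_ne_one hgcd

variable (ι) in
def primitiveIndexProdEquiv : PrimitiveIndex ι × ℕ ≃ {m : ι → ℕ // m ≠ 0} where
  toFun p := ⟨fun j => (p.2 + 1) * p.1.1 j, fun h => p.1.2.1 <| funext fun j => by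
    simpa using congrFun h j⟩
  invFun m := (⟨_, div_univ_gcd_ne_zero_and_gcd_eq_one m.2⟩, Finset.univ.gcd m.1 - 1)
  left_inv := fun ⟨⟨k, _, hk⟩, l⟩ => by
    have hgcd : (Finset.univ.gcd fun j => (l + 1) * k j) = l + 1 := by
      rw [Finset.gcd_mul_left, hk]; simp
    ext j <;> simp [hgcd]
  right_inv m := by
    have hg : Finset.univ.gcd m.1 ≠ 0 := Finset.univ_gcd_eq_zero_iff.not.mpr m.2
    ext j
    dsimp only
    rw [Nat.sub_add_cancel (Nat.one_le_iff_ne_zero.mpr hg)]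
    exact Nat.mul_div_cancel' (Finset.gcd_dvd (Finset.mem_univ j))

theorem hasSum_primitiveIndex {E : Type*} [NormedAddCommGroup E] {a : (ι → ℕ) → E} {s : E}
    (ha : HasSum a s) {P : PrimitiveIndex ι → E}
    (hP : ∀ k, HasSum (fun l : ℕ => a fun j => (l + 1) * k.1 j) (P k)) : HasSum P (s - a 0) := by
  have hne : HasSum (fun m : {m : ι → ℕ // m ≠ 0} => a m) (s - a 0) :=
    (hasSum_singleton 0 a).hasSum_iff_compl.mp ha
  exact ((primitiveIndexProdEquiv ι).hasSum_iff.mpr hne).prod_fiberwise hP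

end PrimitiveIndex

section Estimates

variable {ι : Type*} [Fintype ι]

variable (ι) in
theorem summable_pow_sum {q : ℝ} (h0 : 0 ≤ q) (h1 : q < 1) :
    Summable fun m : ι → ℕ => q ^ ∑ j, m j := by
  classical
  refine summable_of_sum_le (c := (1 - q)⁻¹ ^ Fintype.card ι) (fun m => by positivity)
    fun T => ?_
  set N := T.sup (fun m => ∑ j, m j) + 1
  have hT : T ⊆ Fintype.piFinset fun _ => Finset.range N := fun m hm => by
    simp only [Fintype.mem_piFinset, Finset.mem_range]
    intro j
    have := (Finset.single_le_sum (fun j _ => Nat.zero_le (m j)) (Finset.mem_univ j)).trans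
      (Finset.le_sup (f := fun m => ∑ j, m j) hm)
    omega
  have hgeom : ∑ l ∈ Finset.range N, q ^ l ≤ (1 - q)⁻¹ := by
    rw [← tsum_geometric_of_lt_one h0 h1]
    exact (summable_geometric_of_lt_one h0 h1).sum_le_tsum _ fun l _ => by positivity
  calc ∑ m ∈ T, q ^ ∑ j, m j
      ≤ ∑ m ∈ Fintype.piFinset (fun _ => Finset.range N), q ^ ∑ j, m j :=
        Finset.sum_le_sum_of_subset_of_nonneg hT fun _ _ _ => by positivity
    _ = ∏ _j : ι, ∑ l ∈ Finset.range N, q ^ l := by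
        simp only [Finset.prod_univ_sum, Finset.prod_pow_eq_pow_sum]
    _ ≤ (1 - q)⁻¹ ^ Fintype.card ι := by
        rw [← Finset.card_univ, ← Finset.prod_const]
        exact Finset.prod_le_prod (fun _ _ => by positivity) fun _ _ => hgeom

theorem norm_mul_prod_pow_le {z b : ι → ℂ} (h : ∀ j, ‖z j‖ ≤ ‖b j‖) (a : ℂ) (m : ι → ℕ) :
    ‖a * ∏ j, z j ^ m j‖ ≤ ‖a * ∏ j, b j ^ m j‖ := by
  simp only [norm_mul, norm_prod, norm_pow]
  gcongr with j
  exact h j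

theorem norm_mul_prod_smul_pow {q : ℝ} (hq : 0 ≤ q) (ζ : ι → ℂ) (a : ℂ) (m : ι → ℕ) :
    ‖a * ∏ j, (q • ζ) j ^ m j‖ = q ^ (∑ j, m j) * ‖a * ∏ j, ζ j ^ m j‖ := by
  simp only [norm_mul, norm_prod, norm_pow, Pi.smul_apply, norm_smul, Real.norm_of_nonneg hq,
    mul_pow, Finset.prod_mul_distrib, Finset.prod_pow_eq_pow_sum]
  ring

theorem norm_le_of_hasSum_of_norm_le_geometric {E : Type*} [NormedAddCommGroup E] {a : ℕ → E}
    {p : E} (hp : HasSum a p) {C x : ℝ} (hx0 : 0 ≤ x) (hx1 : x < 1)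
    (h : ∀ l, ‖a l‖ ≤ C * x ^ (l + 1)) : ‖p‖ ≤ C * x / (1 - x) := by
  have hg : HasSum (fun l => C * x ^ (l + 1)) (C * x / (1 - x)) := by
    simpa only [pow_succ', ← mul_assoc, div_eq_mul_inv] using
      (hasSum_geometric_of_lt_one hx0 hx1).mul_left (C * x)
  exact hp.norm_le_of_bounded hg h

theorem norm_le_of_hasSum_multiples {c : (ι → ℕ) → ℂ} {q C : ℝ} (hq0 : 0 ≤ q) (hq1 : q < 1)
    (hC0 : 0 ≤ C) {ζ : ι → ℂ} (hC : ∀ m, ‖c m * ∏ j, ζ j ^ m j‖ ≤ C) {k : ι → ℕ} (hk : k ≠ 0)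
    {p : ℂ}
    (hp : HasSum (fun l : ℕ => c (fun j => (l + 1) * k j) * ∏ j, (q • ζ) j ^ ((l + 1) * k j))
      p) :
    ‖p‖ ≤ C / (1 - q) * q ^ ∑ j, k j := by
  set s := ∑ j, k j
  have hs : s ≠ 0 := fun h =>
    hk <| funext fun j => Finset.sum_eq_zero_iff.mp h j (Finset.mem_univ j)
  have hx1 : q ^ s < 1 := pow_lt_one₀ hq0 hq1 hs
  have hterm (l : ℕ) : ‖c (fun j => (l + 1) * k j) * ∏ j, (q • ζ) j ^ ((l + 1) * k j)‖ ≤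
      C * (q ^ s) ^ (l + 1) := by
    rw [norm_mul_prod_smul_pow hq0, ← Finset.mul_sum, pow_mul', mul_comm C]
    exact mul_le_mul_of_nonneg_left (hC _) (by positivity)
  calc ‖p‖ ≤ C * q ^ s / (1 - q ^ s) :=
        norm_le_of_hasSum_of_norm_le_geometric hp (by positivity) hx1 hterm
    _ ≤ C * q ^ s / (1 - q) := by
        gcongr
        exact pow_le_of_le_one hq0 hq1.le hs
    _ = C / (1 - q) * q ^ s := by ring

end Estimates

def IsCompleteCircled {ι : Type*} (G : Set (ι → ℂ)) : Prop :=
  ∀ z ∈ G, ∀ w : ι → ℂ, (∀ j, ‖w j‖ ≤ ‖z j‖) → w ∈ G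

namespace IsCompleteCircled

variable {ι : Type*} [Fintype ι] {G : Set (ι → ℂ)}

theorem smul_mem_of_mem_closure (hG : IsCompleteCircled G) {r : ℝ} (hr0 : 0 ≤ r) (hr1 : r < 1)
    {w : ι → ℂ} (hw : w ∈ closure G) : r • w ∈ G := by
  set U : Set (ι → ℂ) := ⋂ j, {z | w j ≠ 0 → r * ‖w j‖ < ‖z j‖}
  have hU : IsOpen U := isOpen_iInter_of_finite fun j => by
    by_cases h : w j = 0
    · simp [h]
    · simpa [h] using isOpen_lt continuous_const (continuous_apply j).norm
  have hwU : w ∈ U := Set.mem_iInter.mpr fun j h => by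
    have := norm_pos_iff.mpr h
    nlinarith
  obtain ⟨z, hzU, hzG⟩ := mem_closure_iff.mp hw U hU hwU
  refine hG z hzG _ fun j => ?_
  rw [Pi.smul_apply, norm_smul, Real.norm_of_nonneg hr0]
  by_cases h : w j = 0
  · simp [h]
  · exact (Set.mem_iInter.mp hzU j h).le

theorem smul_closure_subset (hG : IsCompleteCircled G) {r : ℝ} (hr0 : 0 ≤ r) (hr1 : r < 1) :
    r • closure G ⊆ G := by
  rintro _ ⟨w, hw, rfl⟩
  exact hG.smul_mem_of_mem_closure hr0 hr1 hw

theorem exists_mem_eventually_norm_le (hG : IsCompleteCircled G) (hop : IsOpen G) {a : ι → ℂ}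
    (ha : a ∈ G) : ∃ b ∈ G, ∀ᶠ z in 𝓝 a, ∀ j, ‖z j‖ ≤ ‖b j‖ := by
  -- rotating each coordinate of `a` onto `[0, ∞)` lets it be enlarged along the real axis
  set a' : ι → ℂ := fun j => (‖a j‖ : ℂ)
  have ha' : a' ∈ G := hG a ha a' fun j => by simp [a']
  obtain ⟨δ, hδ, hball⟩ := Metric.isOpen_iff.mp hop a' ha'
  set b : ι → ℂ := fun j => ((‖a j‖ + δ / 2 : ℝ) : ℂ)
  have hb (j : ι) : ‖b j‖ = ‖a j‖ + δ / 2 := by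
    simp only [b, Complex.norm_real, Real.norm_of_nonneg (by positivity : 0 ≤ ‖a j‖ + δ / 2)]
  refine ⟨b, hball ((dist_pi_lt_iff hδ).mpr fun j => ?_), ?_⟩
  · simp only [b, a', dist_eq_norm, Complex.ofReal_add, add_sub_cancel_left, Complex.norm_real]
    rw [Real.norm_of_nonneg (by positivity)]
    linarith
  · refine eventually_all.mpr fun j => ?_
    have hlt : ‖a j‖ < ‖b j‖ := by rw [hb]; linarith
    filter_upwards [(continuous_apply j).norm.continuousAt.eventually_lt continuousAt_const hlt]
      with z hz using hz.le

theorem exists_bound_of_isCompact (hG : IsCompleteCircled G) (hop : IsOpen G)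
    {c : (ι → ℕ) → ℂ} (hsum : ∀ z ∈ G, Summable fun m => ‖c m * ∏ j, z j ^ m j‖)
    {K : Set (ι → ℂ)} (hK : IsCompact K) (hKG : K ⊆ G) :
    ∃ C, 0 ≤ C ∧ ∀ ζ ∈ K, ∀ m, ‖c m * ∏ j, ζ j ^ m j‖ ≤ C := by
  refine hK.induction_on (p := fun s => ∃ C, 0 ≤ C ∧ ∀ ζ ∈ s, ∀ m, ‖c m * ∏ j, ζ j ^ m j‖ ≤ C)
    ⟨0, le_rfl, by simp⟩ (fun s t hst ⟨C, hC0, hC⟩ => ⟨C, hC0, fun ζ hζ => hC ζ (hst hζ)⟩)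
    (fun s t ⟨C, hC0, hC⟩ ⟨D, _, hD⟩ => ⟨max C D, le_max_of_le_left hC0, ?_⟩) fun a ha => ?_
  · rintro ζ (hζ | hζ) m
    exacts [le_max_of_le_left (hC ζ hζ m), le_max_of_le_right (hD ζ hζ m)]
  · obtain ⟨b, hb, hdom⟩ := hG.exists_mem_eventually_norm_le hop (hKG ha)
    refine ⟨_, mem_nhdsWithin_of_mem_nhds hdom, ∑' m, ‖c m * ∏ j, b j ^ m j‖,
      tsum_nonneg fun _ => norm_nonneg _, fun ζ hζ m => ?_⟩
    exact (norm_mul_prod_pow_le hζ _ m).trans ((hsum b hb).le_tsum m fun _ _ => norm_nonneg _)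

theorem exists_summable_bound (hG : IsCompleteCircled G) (hop : IsOpen G)
    (hbd : Bornology.IsBounded G) {c : (ι → ℕ) → ℂ}
    (hsum : ∀ z ∈ G, Summable fun m => ‖c m * ∏ j, z j ^ m j‖)
    {P : PrimitiveIndex ι → (ι → ℂ) → ℂ}
    (hP : ∀ k : PrimitiveIndex ι, ∀ z ∈ G,
      HasSum (fun l : ℕ => c (fun j => (l + 1) * k.1 j) * ∏ j, z j ^ ((l + 1) * k.1 j)) (P k z))
    {r : ℝ} (hr0 : 0 < r) (hr1 : r < 1) :
    ∃ u : PrimitiveIndex ι → ℝ, Summable u ∧ 0 ≤ u ∧ ∀ k, ∀ z ∈ r • closure G, ‖P k z‖ ≤ u k := by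
  set q := √r
  have hq0 : 0 < q := Real.sqrt_pos.mpr hr0
  have hq1 : q < 1 := (Real.sqrt_lt' one_pos).mpr (by simpa using hr1)
  have hK : IsCompact (q • closure G) := hbd.isCompact_closure.smul q
  obtain ⟨C, hC0, hC⟩ :=
    hG.exists_bound_of_isCompact hop hsum hK (hG.smul_closure_subset hq0.le hq1)
  refine ⟨fun k => C / (1 - q) * q ^ ∑ j, k.1 j,
    ((summable_pow_sum ι hq0.le hq1).subtype _).mul_left _, fun k => by positivity, ?_⟩
  rintro k _ ⟨w, hw, rfl⟩
  dsimp only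
  have hrw : r • w = q • q • w := by rw [smul_smul, Real.mul_self_sqrt hr0.le]
  have hPw := hP k _ (hG.smul_mem_of_mem_closure hr0.le hr1 hw)
  rw [hrw] at hPw ⊢
  exact norm_le_of_hasSum_multiples hq0.le hq1 hC0 (hC _ ⟨w, hw, rfl⟩) k.2.1 hPw

end IsCompleteCircled

theorem stmt_13_general (n : ℕ) (G : Set (Fin n → ℂ))
    (hop : IsOpen G) (hbd : Bornology.IsBounded G)
    (hcirc : ∀ z ∈ G, ∀ w : Fin n → ℂ, (∀ j, ‖w j‖ ≤ ‖z j‖) → w ∈ G)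
    (f : (Fin n → ℂ) → ℂ) (c : (Fin n → ℕ) → ℂ)
    (hsum : ∀ z ∈ G,
      Summable (fun m : Fin n → ℕ => ‖c m * ∏ j, z j ^ m j‖) ∧
      HasSum (fun m : Fin n → ℕ => c m * ∏ j, z j ^ m j) (f z))
    (P : (Fin n → ℕ) → (Fin n → ℂ) → ℂ)
    (hP : ∀ k : Fin n → ℕ, k ≠ 0 → Finset.univ.gcd k = 1 → ∀ z ∈ G,
      Summable (fun l : ℕ => ‖c (fun j => (l + 1) * k j) * ∏ j, z j ^ ((l + 1) * k j)‖) ∧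
      HasSum (fun l : ℕ => c (fun j => (l + 1) * k j) * ∏ j, z j ^ ((l + 1) * k j))
        (P k z)) :
    (∀ r ∈ Set.Ioo (0 : ℝ) 1,
      Summable (fun k : {k : Fin n → ℕ // k ≠ 0 ∧ Finset.univ.gcd k = 1} =>
        ⨆ z ∈ r • closure G, ‖P k.val z‖)) ∧
    (∀ z ∈ G,
      HasSum (fun k : {k : Fin n → ℕ // k ≠ 0 ∧ Finset.univ.gcd k = 1} => P k.val z)
        (f z - c 0)) ∧
    (∀ r ∈ Set.Ioo (0 : ℝ) 1,
      TendstoUniformlyOn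
        (fun (S : Finset {k : Fin n → ℕ // k ≠ 0 ∧ Finset.univ.gcd k = 1})
            (z : Fin n → ℂ) => c 0 + ∑ k ∈ S, P k.val z)
        f Filter.atTop (r • closure G)) := by
  have hG : IsCompleteCircled G := hcirc
  have hbound (r : ℝ) (hr : r ∈ Set.Ioo (0 : ℝ) 1) :=
    hG.exists_summable_bound hop hbd (fun z hz => (hsum z hz).1)
      (P := fun k => P k.1) (fun k z hz => (hP k.1 k.2.1 k.2.2 z hz).2) hr.1 hr.2
  have hdecomp (z : Fin n → ℂ) (hz : z ∈ G) :
      HasSum (fun k : PrimitiveIndex (Fin n) => P k.1 z) (f z - c 0) := by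
    simpa using hasSum_primitiveIndex (hsum z hz).2 fun k => (hP k.1 k.2.1 k.2.2 z hz).2
  refine ⟨fun r hr => ?_, hdecomp, fun r hr => ?_⟩
  · obtain ⟨u, hu, hu0, hPu⟩ := hbound r hr
    exact hu.of_nonneg_of_le
      (fun k => Real.iSup_nonneg fun z => Real.iSup_nonneg fun _ => norm_nonneg _)
      fun k => Real.iSup_le (fun z => Real.iSup_le (hPu k z) (hu0 k)) (hu0 k)
  · obtain ⟨u, hu, -, hPu⟩ := hbound r hr
    refine ((tendsto_const_nhds.tendstoUniformlyOn_const _).fun_add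
      (tendstoUniformlyOn_tsum hu hPu)).congr_right fun z hz => ?_
    simp only [(hdecomp z (hG.smul_closure_subset hr.1.le hr.2 hz)).tsum_eq, add_sub_cancel]

/-- Decomposition of the identity: for `f` holomorphic on a bounded
complete `n`-circled domain `G` with monomial expansion `f(z) = Σ_m c_m z^m`, the
projections `P_k f(z) = Σ_{l≥1} c_{l·k} z^{l·k}` (`k` ranging over `M`, the nonzero
multi-indices with relatively prime coordinates) satisfy: (a) `Σ_{k∈M} ‖P_k f‖_{r•cl G} < ∞`
for every `0 < r < 1`; (b) `f(z) = c_0 + Σ_{k∈M} P_k f(z)` on `G`; (c) the net of finite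
partial sums converges to `f` uniformly on `r•closure(G)` for every `0 < r < 1`. -/
theorem stmt_13 (n : ℕ) (G : Set (Fin n → ℂ))
    (hop : IsOpen G) (hconn : IsConnected G) (hbd : Bornology.IsBounded G)
    (hne : G.Nonempty)
    (hcirc : ∀ z ∈ G, ∀ w : Fin n → ℂ, (∀ j, ‖w j‖ ≤ ‖z j‖) → w ∈ G)
    (f : (Fin n → ℂ) → ℂ) (c : (Fin n → ℕ) → ℂ)
    (hsum : ∀ z ∈ G,
      Summable (fun m : Fin n → ℕ => ‖c m * ∏ j, z j ^ m j‖) ∧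
      HasSum (fun m : Fin n → ℕ => c m * ∏ j, z j ^ m j) (f z))
    (hρ : ∀ k : Fin n → ℕ, k ≠ 0 → Finset.univ.gcd k = 1 →
      ∃ ρ : Fin n → ℝ, (∀ j, 0 < ρ j) ∧ {z : Fin n → ℂ | ∀ j, ‖z j‖ < ρ j} ⊆ G ∧
        ∀ z ∈ G, ‖∏ j, z j ^ k j‖ ≤ ∏ j, ρ j ^ k j)
    (P : (Fin n → ℕ) → (Fin n → ℂ) → ℂ)
    (hP : ∀ k : Fin n → ℕ, k ≠ 0 → Finset.univ.gcd k = 1 → ∀ z ∈ G,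
      Summable (fun l : ℕ => ‖c (fun j => (l + 1) * k j) * ∏ j, z j ^ ((l + 1) * k j)‖) ∧
      HasSum (fun l : ℕ => c (fun j => (l + 1) * k j) * ∏ j, z j ^ ((l + 1) * k j))
        (P k z)) :
    (∀ r ∈ Set.Ioo (0 : ℝ) 1,
      Summable (fun k : {k : Fin n → ℕ // k ≠ 0 ∧ Finset.univ.gcd k = 1} =>
        ⨆ z ∈ r • closure G, ‖P k.val z‖)) ∧
    (∀ z ∈ G,
      HasSum (fun k : {k : Fin n → ℕ // k ≠ 0 ∧ Finset.univ.gcd k = 1} => P k.val z)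
        (f z - c 0)) ∧
    (∀ r ∈ Set.Ioo (0 : ℝ) 1,
      TendstoUniformlyOn
        (fun (S : Finset {k : Fin n → ℕ // k ≠ 0 ∧ Finset.univ.gcd k = 1})
            (z : Fin n → ℂ) => c 0 + ∑ k ∈ S, P k.val z)
        f Filter.atTop (r • closure G)) :=
  stmt_13_general n G hop hbd hcirc f c hsum P hP
end
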